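/- arXiv:1911.12693 — 4 statements merged into one kernel-verified Lean document; each statement's English description precedes it below -/
import Mathlib

section
/- The inverse quantum Cartan matrix coefficients vanish at multiples of the Coxeter number: c̃_{ij}(kh) = 0 for all i, j ∈ I and all integers k ≥ 1. -/
open Matrix

/-- A simply-laced finite-type (`ADE`) generalized Cartan matrix. -/
structure IsADECartan {n : ℕ} (C : Matrix (Fin n) (Fin n) ℤ) : Prop where
  symm : ∀ i j, C i j = C j i
  diag : ∀ i, C i i = 2
  offdiag : ∀ i j, i ≠ j → C i j = 0 ∨ C i j = -1
  posDef : (C.map ((↑) : ℤ → ℝ)).PosDef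
  connected : ∀ i j, Relation.ReflTransGen (fun a b => C a b = -1) i j

/-- The quantum Cartan matrix `C(z)` over the field of formal Laurent series. -/
noncomputable def qCartan {n : ℕ} (C : Matrix (Fin n) (Fin n) ℤ) :
    Matrix (Fin n) (Fin n) (LaurentSeries ℚ) :=
  Matrix.of fun i j =>
    if i = j then HahnSeries.single (1 : ℤ) (1 : ℚ) + HahnSeries.single (-1 : ℤ) (1 : ℚ)
    else (C i j : LaurentSeries ℚ)

/-- The simple reflection `r_i` acting on the root lattice, written in the basis of
simple roots: `(r_i v)_i = v_i - Σ_j c_{ji} v_j` and `(r_i v)_k = v_k` for `k ≠ i`. -/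
def simpleRefl {n : ℕ} (C : Matrix (Fin n) (Fin n) ℤ) (i : Fin n) (v : Fin n → ℤ) :
    Fin n → ℤ :=
  fun k => if k = i then v i - ∑ j, C j i * v j else v k

/-- The product of the simple reflections indexed by a list `L` (first entry acting last
is irrelevant here; we compose left-to-right: `r_{i₁} ∘ r_{i₂} ∘ ⋯`). -/
def coxeterOf {n : ℕ} (C : Matrix (Fin n) (Fin n) ℤ) (L : List (Fin n)) :
    (Fin n → ℤ) → Fin n → ℤ :=
  (L.map (simpleRefl C)).foldr (· ∘ ·) id

/-- The Coxeter element `τ = r_1 r_2 ⋯ r_n` (a product of all simple reflections, each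
occurring once).  Its order is the Coxeter number `h`. -/
def coxeterElem {n : ℕ} (C : Matrix (Fin n) (Fin n) ℤ) : (Fin n → ℤ) → Fin n → ℤ :=
  coxeterOf C (List.finRange n)

/-!
Let `A = 2 - C` be the adjacency matrix of the Dynkin diagram, so that `C(z) = (z + z⁻¹) - A`
and `C(z)⁻¹ = ∑_{ℓ ≥ 1} S_{ℓ-1}(A) z^ℓ`, where `S` are the rescaled Chebyshev polynomials of the
second kind (`S_{m+1} = X S_m - S_{m-1}`). Since `S_{h-1}` divides `S_{kh-1}`, it suffices to show
`S_{h-1}(A) = 0`, and as `A` is symmetric it suffices that `S_{h-1}(t) = 0` for every eigenvalue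
`t = μ + μ⁻¹` of `A`.

Write `C = U + Uᵀ` with `U` upper unitriangular; then the Coxeter element is `τ = -U⁻¹ Uᵀ`. The
Dynkin diagram is a forest, so it carries a height function `d` with `d j = d i + 1` along every
edge `i < j`, and conjugation by `diag (μ ^ d i)` turns `U + μ² Uᵀ` into `μ C(μ)`. Hence an
eigenvector of `A` for `μ + μ⁻¹` yields an eigenvector of `τ` for `μ⁻²`, so `τ ^ h = 1` forces
`μ ^ (2h) = 1`, while the invertibility of `C` excludes `μ² = 1`. Finally
`(μ - μ⁻¹) S_{h-1}(μ + μ⁻¹) = μ^h - μ^{-h} = 0`.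
-/

open Finset Polynomial

namespace Polynomial.Chebyshev

variable {R : Type*} [CommRing R]

theorem S_add (m n : ℤ) : S R (m + n) = S R m * S R n - S R (m - 1) * S R (n - 1) := by
  induction n using Polynomial.Chebyshev.induct with
  | zero => simp [S_neg_one]
  | one => simp [S_one, S_add_one R m, mul_comm]
  | add_two k ih1 ih0 =>
    linear_combination (norm := ring_nf) S_add_two R (m + k) + X * ih1 - ih0
      - S R m * S_add_two R k + S R (m - 1) * S_add_one R k
  | neg_add_one k ih0 ih1 =>
    linear_combination (norm := ring_nf) S_sub_one R (m - k) + X * ih0 - ih1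
      - S R m * S_sub_one R (-k) + S R (m - 1) * S_sub_two R (-k)

theorem S_sub_one_dvd_S_mul_sub_one (h k : ℕ) : S R (h - 1) ∣ S R (k * h - 1) := by
  induction k with
  | zero => simp [S_neg_one]
  | succ k ih =>
    rw [show ((k + 1 : ℕ) * h - 1 : ℤ) = h + (k * h - 1) by push_cast; ring, S_add]
    exact dvd_sub (dvd_mul_of_dvd_right ih _) (dvd_mul_right _ _)

theorem sub_mul_eval_S_sub_one {μ ν : R} (hμν : μ * ν = 1) (n : ℕ) :
    (μ - ν) * (S R (n - 1)).eval (μ + ν) = μ ^ n - ν ^ n := by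
  induction n using Nat.twoStepInduction with
  | zero => simp [S_neg_one]
  | one => simp
  | more k ih0 ih1 =>
    push_cast at ih1 ⊢
    rw [add_sub_cancel_right] at ih1
    rw [show (k : ℤ) + 2 - 1 = k + 1 by ring, S_add_one, eval_sub, eval_mul, eval_X]
    linear_combination (μ + ν) * ih1 - ih0 + (μ ^ k - ν ^ k) * hμν

theorem eval_S_sub_one_add_inv_eq_zero {K : Type*} [Field K] {μ : K} (hμ : μ ≠ 0) {h : ℕ}
    (hμh : (μ ^ 2) ^ h = 1) (hμ2 : μ ^ 2 ≠ 1) : (S K (h - 1)).eval (μ + μ⁻¹) = 0 := by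
  have hsq : (μ⁻¹ ^ h) ^ 2 = 1 := by
    rw [← pow_mul, mul_comm, pow_mul, inv_pow, inv_pow, hμh, inv_one]
  have hinv : μ ^ h * μ⁻¹ ^ h = 1 := by rw [← mul_pow, mul_inv_cancel₀ hμ, one_pow]
  have hne : μ - μ⁻¹ ≠ 0 := by
    rw [show μ - μ⁻¹ = μ⁻¹ * (μ ^ 2 - 1) by field_simp]
    exact mul_ne_zero (inv_ne_zero hμ) (sub_ne_zero.mpr hμ2)
  have key := sub_mul_eval_S_sub_one (mul_inv_cancel₀ hμ) h
  rw [show μ ^ h - μ⁻¹ ^ h = 0 by linear_combination (-μ ^ h) * hsq + μ⁻¹ ^ h * hinv] at key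
  exact (mul_eq_zero.mp key).resolve_left hne

end Polynomial.Chebyshev

open Polynomial.Chebyshev

theorem Matrix.IsHermitian.aeval_eq_zero_of_eval_eigenvalues {𝕜 : Type*} [RCLike 𝕜] {ι : Type*}
    [Fintype ι] [DecidableEq ι] {A : Matrix ι ι 𝕜} (hA : A.IsHermitian) {p : 𝕜[X]}
    (hp : ∀ (t : 𝕜) (v : ι → 𝕜), v ≠ 0 → A *ᵥ v = t • v → p.eval t = 0) : aeval A p = 0 := by
  have hdiag : aeval (RCLike.ofReal ∘ hA.eigenvalues : ι → 𝕜) p = 0 := by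
    ext k
    have hv : ⇑(hA.eigenvectorBasis k) ≠ 0 := fun h0 =>
      hA.eigenvectorBasis.orthonormal.ne_zero k (by ext i; simp [h0])
    simpa [aeval_pi_apply₂] using hp _ _ hv (by
      rw [hA.mulVec_eigenvectorBasis, RCLike.real_smul_eq_coe_smul (K := 𝕜)])
  rw [hA.spectral_theorem, ← Matrix.diagonalAlgHom_apply (R := 𝕜),
    ← (Unitary.conjStarAlgAut 𝕜 _ _).coe_toAlgEquiv, aeval_algEquiv, AlgHom.comp_apply,
    aeval_algHom_apply, hdiag, map_zero, map_zero]

theorem Matrix.pow_eq_one_of_mulVec_eq_smul {K ι : Type*} [Field K] [Fintype ι] [DecidableEq ι]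
    {M : Matrix ι ι K} {h : ℕ} (hM : M ^ h = 1) {c : K} {w : ι → K} (hw : w ≠ 0)
    (hMw : M *ᵥ w = c • w) : c ^ h = 1 := by
  have hpow : ∀ m : ℕ, M ^ m *ᵥ w = c ^ m • w := fun m => by
    induction m with
    | zero => simp
    | succ m ih =>
      rw [pow_succ', ← Matrix.mulVec_mulVec, ih, Matrix.mulVec_smul, hMw, smul_smul, ← pow_succ]
  have h0 : (c ^ h - 1) • w = 0 := by
    rw [sub_smul, one_smul, ← hpow, hM, Matrix.one_mulVec, sub_self]
  exact sub_eq_zero.mp ((smul_eq_zero.mp h0).resolve_right hw)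

theorem Complex.exists_ne_zero_add_inv_eq (t : ℂ) : ∃ μ : ℂ, μ ≠ 0 ∧ μ + μ⁻¹ = t := by
  obtain ⟨s, hs⟩ := IsAlgClosed.exists_pow_nat_eq (t ^ 2 - 4) two_pos
  have hμ : (t + s) / 2 * ((t - s) / 2) = 1 := by linear_combination -hs / 4
  refine ⟨(t + s) / 2, left_ne_zero_of_mul_eq_one hμ, ?_⟩
  rw [inv_eq_of_mul_eq_one_right hμ]
  ring

theorem Finset.sum_univ_eq_sum_Iic_add_sum_Ioi {α M : Type*} [Fintype α] [LinearOrder α]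
    [LocallyFiniteOrderBot α] [LocallyFiniteOrderTop α] [AddCommMonoid M] (f : α → M) (a : α) :
    ∑ j, f j = ∑ j ∈ Iic a, f j + ∑ j ∈ Ioi a, f j := by
  rw [← sum_filter_add_sum_filter_not univ (· ≤ a)]
  simp [filter_ge_eq_Iic, not_le, filter_lt_eq_Ioi]

section CoxeterElement

variable {n : ℕ}

def reflMatrix (C : Matrix (Fin n) (Fin n) ℤ) (i : Fin n) : Matrix (Fin n) (Fin n) ℤ :=
  1 - Matrix.of fun k j => if k = i then C j i else 0

theorem simpleRefl_eq_mulVec (C : Matrix (Fin n) (Fin n) ℤ) (i : Fin n) (v : Fin n → ℤ) :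
    simpleRefl C i v = reflMatrix C i *ᵥ v := by
  rw [reflMatrix, Matrix.sub_mulVec, Matrix.one_mulVec]
  ext k
  by_cases hk : k = i <;> simp [simpleRefl, Matrix.mulVec, dotProduct, hk]

theorem coxeterOf_eq_mulVec (C : Matrix (Fin n) (Fin n) ℤ) (L : List (Fin n)) (v : Fin n → ℤ) :
    coxeterOf C L v = (L.map (reflMatrix C)).prod *ᵥ v := by
  induction L with
  | nil => simp [coxeterOf]
  | cons a L ih =>
    simp only [List.map_cons, List.prod_cons, ← Matrix.mulVec_mulVec, ← ih,
      ← simpleRefl_eq_mulVec]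
    rfl

def coxeterMatrix (C : Matrix (Fin n) (Fin n) ℤ) : Matrix (Fin n) (Fin n) ℤ :=
  ((List.finRange n).map (reflMatrix C)).prod

theorem iterate_coxeterElem (C : Matrix (Fin n) (Fin n) ℤ) (m : ℕ) (v : Fin n → ℤ) :
    (coxeterElem C)^[m] v = coxeterMatrix C ^ m *ᵥ v := by
  induction m with
  | zero => simp
  | succ m ih =>
    rw [Function.iterate_succ_apply', ih, coxeterElem, coxeterOf_eq_mulVec, ← coxeterMatrix,
      Matrix.mulVec_mulVec, ← pow_succ']

theorem coxeterMatrix_pow_eq_one (C : Matrix (Fin n) (Fin n) ℤ) {h : ℕ}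
    (hper : (coxeterElem C)^[h] = id) : coxeterMatrix C ^ h = 1 :=
  Matrix.ext_iff_mulVec.mpr fun v => by rw [← iterate_coxeterElem, hper, Matrix.one_mulVec, id]

theorem coxeterOf_apply_of_notMem (C : Matrix (Fin n) (Fin n) ℤ) {L : List (Fin n)} {j : Fin n}
    (hj : j ∉ L) (v : Fin n → ℤ) : coxeterOf C L v j = v j := by
  induction L with
  | nil => rfl
  | cons a L ih =>
    rw [List.mem_cons, not_or] at hj
    simp only [coxeterOf, List.map_cons, List.foldr_cons, Function.comp_apply, simpleRefl,
      if_neg hj.1]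
    exact ih hj.2

/-- Along an increasing list, coordinate `i` is changed only by `r_i`, which acts when the
coordinates above `i` are already final and those below `i` are still the initial ones. -/
theorem coxeterOf_apply_add_sum_Ioi (C : Matrix (Fin n) (Fin n) ℤ) (hdiag : ∀ i, C i i = 2)
    {L : List (Fin n)} (hL : L.Pairwise (· < ·)) {i : Fin n} (hi : i ∈ L) (v : Fin n → ℤ) :
    coxeterOf C L v i + ∑ j ∈ Ioi i, C j i * coxeterOf C L v j
      = -v i - ∑ j ∈ Iio i, C j i * v j := by
  induction L with
  | nil => simp at hi
  | cons a L ih =>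
    rw [List.pairwise_cons] at hL
    set x := coxeterOf C L v
    have hx : ∀ j ≤ a, x j = v j := fun j hj =>
      coxeterOf_apply_of_notMem C (fun hjL => (hL.1 j hjL).not_ge hj) v
    have hstep : coxeterOf C (a :: L) v = simpleRefl C a x := rfl
    have hne : ∀ j, j ≠ a → simpleRefl C a x j = x j := fun j hj => if_neg hj
    rcases List.mem_cons.mp hi with rfl | hi
    · rw [hstep, sum_congr rfl fun j hj => by rw [hne j (mem_Ioi.mp hj).ne'],
        simpleRefl, if_pos rfl, sum_univ_eq_sum_Iic_add_sum_Ioi _ i, ← Iio_insert,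
        sum_insert notMem_Iio_self, hdiag, hx i le_rfl,
        sum_congr rfl fun j hj => by rw [hx j (mem_Iio.mp hj).le]]
      ring
    · have hai : a < i := hL.1 i hi
      rw [hstep, hne i hai.ne',
        sum_congr rfl fun j hj => by rw [hne j (hai.trans (mem_Ioi.mp hj)).ne']]
      exact ih hL.2 hi

def strictUpper (C : Matrix (Fin n) (Fin n) ℤ) : Matrix (Fin n) (Fin n) ℤ :=
  Matrix.of fun i j => if i < j then C i j else 0

theorem strictUpper_mulVec_apply (C : Matrix (Fin n) (Fin n) ℤ) (v : Fin n → ℤ) (i : Fin n) :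
    (strictUpper C *ᵥ v) i = ∑ j ∈ Ioi i, C i j * v j := by
  simp [strictUpper, Matrix.mulVec, dotProduct, ite_mul, sum_ite, filter_lt_eq_Ioi]

theorem strictUpper_transpose_mulVec_apply (C : Matrix (Fin n) (Fin n) ℤ) (v : Fin n → ℤ)
    (i : Fin n) : ((strictUpper C)ᵀ *ᵥ v) i = ∑ j ∈ Iio i, C j i * v j := by
  simp [strictUpper, Matrix.mulVec, dotProduct, ite_mul, sum_ite, filter_gt_eq_Iio]

theorem one_add_strictUpper_mul_coxeterMatrix (C : Matrix (Fin n) (Fin n) ℤ)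
    (hsymm : ∀ i j, C i j = C j i) (hdiag : ∀ i, C i i = 2) :
    (1 + strictUpper C) * coxeterMatrix C = -(1 + strictUpper C)ᵀ := by
  refine Matrix.ext_iff_mulVec.mpr fun v => funext fun i => ?_
  have hrow := coxeterOf_apply_add_sum_Ioi C hdiag (List.pairwise_lt_finRange n)
    (List.mem_finRange i) v
  rw [← Matrix.mulVec_mulVec, coxeterMatrix, ← coxeterOf_eq_mulVec]
  simp only [Matrix.transpose_add, Matrix.transpose_one, Matrix.add_mulVec, Matrix.one_mulVec,
    Matrix.neg_mulVec, Pi.add_apply, Pi.neg_apply, strictUpper_mulVec_apply,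
    strictUpper_transpose_mulVec_apply]
  simp_rw [hsymm i]
  linarith

end CoxeterElement

theorem sum_sum_pos_of_posDef {ι : Type*} [Fintype ι] {C : Matrix ι ι ℤ}
    (hC : (C.map ((↑) : ℤ → ℝ)).PosDef) {S : Finset ι} (hS : S.Nonempty) :
    0 < ∑ i ∈ S, ∑ j ∈ S, C i j := by
  classical
  set x : ι → ℝ := fun i => if i ∈ S then 1 else 0
  have hx : x ≠ 0 := fun h0 => by
    obtain ⟨v, hv⟩ := hS
    simpa [x, hv] using congr_fun h0 v
  have hxx : star x ⬝ᵥ C.map (↑) *ᵥ x = ((∑ i ∈ S, ∑ j ∈ S, C i j : ℤ) : ℝ) := by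
    simp [x, dotProduct, Matrix.mulVec, Finset.sum_ite_mem]
  exact_mod_cast hxx ▸ hC.dotProduct_mulVec_pos hx

section DynkinForest

variable {n : ℕ} {C : Matrix (Fin n) (Fin n) ℤ}

/-- Otherwise every row sum of `C` over `S` would be `≤ 2 - 2`, against positive definiteness. -/
theorem exists_mem_neighbors_subsingleton (hC : IsADECartan C) {S : Finset (Fin n)}
    (hS : S.Nonempty) : ∃ v ∈ S, ∃ u, ∀ j ∈ S, j ≠ v → C v j = -1 → j = u := by
  by_contra! hcon
  have hrow : ∀ v ∈ S, ∑ j ∈ S, C v j ≤ 0 := by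
    intro v hv
    obtain ⟨j₁, hj₁, hj₁v, hCj₁, -⟩ := hcon v hv v
    obtain ⟨j₂, hj₂, hj₂v, hCj₂, hj₂₁⟩ := hcon v hv j₁
    have hoff : ∀ j ∈ S.erase v, C v j ≤ 0 := fun j hj => by
      rcases hC.offdiag v j (ne_of_mem_erase hj).symm with h | h <;> omega
    have hpair : ∑ j ∈ S.erase v, C v j ≤ ∑ j ∈ {j₁, j₂}, C v j :=
      sum_le_sum_of_subset_of_nonpos' (by
        simp [insert_subset_iff, mem_erase, hj₁, hj₂, hj₁v, hj₂v]) fun j hj _ => hoff j hj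
    rw [sum_pair hj₂₁.symm, hCj₁, hCj₂] at hpair
    rw [← add_sum_erase S _ hv, hC.diag]
    omega
  exact (sum_sum_pos_of_posDef hC.posDef hS).not_ge (sum_nonpos hrow)

theorem exists_height_on (hC : IsADECartan C) (S : Finset (Fin n)) :
    ∃ d : Fin n → ℤ, ∀ i ∈ S, ∀ j ∈ S, C i j = -1 → i < j → d j = d i + 1 := by
  induction S using Finset.strongInduction with
  | H S ih =>
    rcases S.eq_empty_or_nonempty with rfl | hS
    · exact ⟨0, by simp⟩
    obtain ⟨v, hv, u, hu⟩ := exists_mem_neighbors_subsingleton hC hS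
    obtain ⟨d, hd⟩ := ih (S.erase v) (erase_ssubset hv)
    refine ⟨Function.update d v (if v < u then d u - 1 else d u + 1), fun i hi j hj hij hlt => ?_⟩
    by_cases hiv : i = v
    · subst hiv
      obtain rfl := hu j hj hlt.ne' hij
      simp [Function.update_of_ne hlt.ne', hlt]
    by_cases hjv : j = v
    · subst hjv
      obtain rfl := hu i hi hiv (by rw [hC.symm]; exact hij)
      simp [Function.update_of_ne hiv, not_lt_of_gt hlt]
    · simp only [Function.update_of_ne hiv, Function.update_of_ne hjv]
      exact hd i (mem_erase.mpr ⟨hiv, hi⟩) j (mem_erase.mpr ⟨hjv, hj⟩) hij hlt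

theorem exists_height (hC : IsADECartan C) :
    ∃ d : Fin n → ℤ, ∀ i j, C i j = -1 → i < j → d j = d i + 1 :=
  (exists_height_on hC univ).imp fun _ hd i j => hd i (mem_univ i) j (mem_univ j)

end DynkinForest

section Eigenvalues

variable {n : ℕ} {K : Type*} [Field K]

def dynkinAdj (C : Matrix (Fin n) (Fin n) ℤ) : Matrix (Fin n) (Fin n) ℤ := 2 - C

theorem det_map_one_add_strictUpper (C : Matrix (Fin n) (Fin n) ℤ) :
    ((1 + strictUpper C).map ((↑) : ℤ → K)).det = 1 := by
  rw [Matrix.det_of_isUpperTriangular fun i j (hji : j < i) => by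
    simp [strictUpper, hji.ne', hji.not_gt]]
  simp [strictUpper]

theorem map_one_add_strictUpper_add_transpose {C : Matrix (Fin n) (Fin n) ℤ}
    (hsymm : ∀ i j, C i j = C j i) (hdiag : ∀ i, C i i = 2) :
    (1 + strictUpper C).map ((↑) : ℤ → K) + ((1 + strictUpper C).map (↑))ᵀ = C.map (↑) := by
  ext i j
  rcases lt_trichotomy i j with hij | rfl | hij
  · simp [strictUpper, hij, hij.ne, hij.ne', hij.not_gt]
  · simp [strictUpper, hdiag]; norm_num
  · simp [strictUpper, hij, hij.ne, hij.ne', hij.not_gt, hsymm i j]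

theorem det_map_ne_zero_of_posDef [CharZero K] {C : Matrix (Fin n) (Fin n) ℤ}
    (hC : (C.map ((↑) : ℤ → ℝ)).PosDef) : (C.map ((↑) : ℤ → K)).det ≠ 0 := by
  have hpos := hC.det_pos
  rw [← (Int.cast_det (R := ℝ) C :)] at hpos
  rw [← (Int.cast_det (R := K) C :)]
  exact_mod_cast hpos.ne'

theorem coxeterMatrix_mulVec_eq_inv_smul {C : Matrix (Fin n) (Fin n) ℤ}
    (hsymm : ∀ i j, C i j = C j i) (hdiag : ∀ i, C i i = 2) {c : K} (hc : c ≠ 0)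
    {w : Fin n → K}
    (hw : ((1 + strictUpper C).map (↑) + c • ((1 + strictUpper C).map (↑))ᵀ) *ᵥ w = 0) :
    (coxeterMatrix C).map (↑) *ᵥ w = c⁻¹ • w := by
  set U : Matrix (Fin n) (Fin n) K := (1 + strictUpper C).map (↑)
  have hUT : U * (coxeterMatrix C).map (↑) = -Uᵀ := by
    have h := congrArg (Int.castRingHom K).mapMatrix
      (one_add_strictUpper_mul_coxeterMatrix C hsymm hdiag)
    rwa [map_mul, map_neg, RingHom.mapMatrix_apply, RingHom.mapMatrix_apply,
      RingHom.mapMatrix_apply, Matrix.transpose_map, Int.coe_castRingHom] at h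
  have hUTw : Uᵀ *ᵥ w = -(c⁻¹ • U *ᵥ w) := by
    rw [Matrix.add_mulVec, Matrix.smul_mulVec, add_eq_zero_iff_neg_eq] at hw
    rw [← smul_neg, hw, inv_smul_smul₀ hc]
  refine sub_eq_zero.mp (Matrix.eq_zero_of_mulVec_eq_zero (M := U)
    (by rw [det_map_one_add_strictUpper]; exact one_ne_zero) ?_)
  rw [Matrix.mulVec_sub, Matrix.mulVec_mulVec, hUT, Matrix.mulVec_smul, Matrix.neg_mulVec, hUTw,
    neg_neg, sub_self]

/-- Conjugated by `diag (μ ^ d i)`, the matrix `U + μ² Uᵀ` becomes `μ C(μ)`, the quantum Cartan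
matrix evaluated at `z = μ`. -/
theorem one_add_strictUpper_add_smul_transpose_mul_diagonal {C : Matrix (Fin n) (Fin n) ℤ}
    (hC : IsADECartan C) {d : Fin n → ℤ} (hd : ∀ i j, C i j = -1 → i < j → d j = d i + 1)
    {μ : K} (hμ : μ ≠ 0) :
    ((1 + strictUpper C).map (↑) + μ ^ 2 • ((1 + strictUpper C).map (↑))ᵀ)
        * Matrix.diagonal (fun i => μ ^ d i)
      = μ • (Matrix.diagonal (fun i => μ ^ d i) * ((μ + μ⁻¹) • 1 - (dynkinAdj C).map (↑))) := by
  ext i j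
  simp only [Matrix.mul_diagonal, Matrix.diagonal_mul, Matrix.add_apply, Matrix.smul_apply,
    Matrix.transpose_apply, Matrix.map_apply, Matrix.sub_apply, Matrix.one_apply,
    Matrix.ofNat_apply, strictUpper, dynkinAdj, Matrix.of_apply, smul_eq_mul]
  rcases lt_trichotomy i j with hij | rfl | hij
  · simp only [hij, hij.ne, hij.ne', hij.not_gt, if_true, if_false, add_zero]
    rcases hC.offdiag i j hij.ne with h | h
    · simp [h]
    · rw [h, hd i j h hij, zpow_add_one₀ hμ]
      ring
  · simp [hC.diag]
    field_simp
    ring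
  · simp only [hij, hij.ne, hij.ne', hij.not_gt, if_true, if_false, zero_add, hC.symm j i]
    rcases hC.offdiag i j hij.ne' with h | h
    · simp [h]
    · rw [h, hd j i (hC.symm i j ▸ h) hij, zpow_add_one₀ hμ]
      ring

theorem eval_S_sub_one_eq_zero_of_mulVec_eq [CharZero K] {C : Matrix (Fin n) (Fin n) ℤ}
    (hC : IsADECartan C) {h : ℕ} (hT : coxeterMatrix C ^ h = 1) {μ : K} (hμ : μ ≠ 0)
    {v : Fin n → K} (hv : v ≠ 0) (hAv : (dynkinAdj C).map (↑) *ᵥ v = (μ + μ⁻¹) • v) :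
    (S K (h - 1)).eval (μ + μ⁻¹) = 0 := by
  obtain ⟨d, hd⟩ := exists_height hC
  set U : Matrix (Fin n) (Fin n) K := (1 + strictUpper C).map (↑)
  set w := Matrix.diagonal (fun i => μ ^ d i) *ᵥ v
  have hw : w ≠ 0 := fun h0 => hv (Matrix.eq_zero_of_mulVec_eq_zero
    (by simp [Matrix.det_diagonal, prod_ne_zero_iff, zpow_ne_zero, hμ]) h0)
  have hUw : (U + μ ^ 2 • Uᵀ) *ᵥ w = 0 := by
    rw [Matrix.mulVec_mulVec, one_add_strictUpper_add_smul_transpose_mul_diagonal hC hd hμ,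
      Matrix.smul_mulVec, ← Matrix.mulVec_mulVec, Matrix.sub_mulVec, hAv, Matrix.smul_mulVec,
      Matrix.one_mulVec, sub_self, Matrix.mulVec_zero, smul_zero]
  have hTw := coxeterMatrix_mulVec_eq_inv_smul hC.symm hC.diag (pow_ne_zero 2 hμ) hUw
  have hTK : (coxeterMatrix C).map ((↑) : ℤ → K) ^ h = 1 := by
    change (coxeterMatrix C).map (Int.castRingHom K) ^ h = 1
    rw [← Matrix.map_pow, hT, Matrix.map_one _ (map_zero _) (map_one _)]
  have hμh := Matrix.pow_eq_one_of_mulVec_eq_smul hTK hw hTw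
  rw [inv_pow, inv_eq_one] at hμh
  refine eval_S_sub_one_add_inv_eq_zero hμ hμh fun h1 => hw ?_
  rw [h1, one_smul, map_one_add_strictUpper_add_transpose hC.symm hC.diag] at hUw
  exact Matrix.eq_zero_of_mulVec_eq_zero (det_map_ne_zero_of_posDef hC.posDef) hUw

theorem aeval_dynkinAdj_S_eq_zero {C : Matrix (Fin n) (Fin n) ℤ} (hC : IsADECartan C) {h : ℕ}
    (hT : coxeterMatrix C ^ h = 1) : aeval (dynkinAdj C) (S ℤ (h - 1)) = 0 := by
  set Aℂ : Matrix (Fin n) (Fin n) ℂ := (dynkinAdj C).map (↑)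
  have hA : Aℂ.IsHermitian := Matrix.IsHermitian.ext fun i j => by
    rcases eq_or_ne i j with rfl | hij
    · simp [Aℂ, dynkinAdj, Matrix.ofNat_apply]
    · simp [Aℂ, dynkinAdj, Matrix.ofNat_apply, hC.symm i j, hij, hij.symm]
  have hℂ : aeval Aℂ (S ℂ (h - 1)) = 0 :=
    hA.aeval_eq_zero_of_eval_eigenvalues fun t v hv hAv => by
      obtain ⟨μ, hμ, rfl⟩ := Complex.exists_ne_zero_add_inv_eq t
      exact eval_S_sub_one_eq_zero_of_mulVec_eq hC hT hμ hv hAv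
  apply Matrix.map_injective (f := ((↑) : ℤ → ℂ)) Int.cast_injective
  change (Int.castRingHom ℂ).mapMatrix.toIntAlgHom (aeval (dynkinAdj C) (S ℤ (h - 1)))
    = (Int.castRingHom ℂ).mapMatrix.toIntAlgHom 0
  rw [map_zero, ← aeval_algHom_apply, ← hℂ, ← map_S (algebraMap ℤ ℂ), aeval_map_algebraMap]
  rfl

end Eigenvalues

theorem LaurentSeries.coeff_intCast_mul {R : Type*} [Ring R] (a : ℤ) (x : LaurentSeries R)
    (ℓ : ℤ) : ((a : LaurentSeries R) * x).coeff ℓ = a * x.coeff ℓ := by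
  rw [← map_intCast HahnSeries.C, HahnSeries.C_mul_eq_smul, HahnSeries.coeff_smul, smul_eq_mul]

section InverseQuantumCartan

variable {n : ℕ}

/-- The coefficient of `z ^ ℓ` in `C(z)⁻¹`; it vanishes at `ℓ = 0` because `S_{-1} = 0`. -/
noncomputable def qCartanInvCoeff (C : Matrix (Fin n) (Fin n) ℤ) (ℓ : ℤ) :
    Matrix (Fin n) (Fin n) ℤ :=
  if 0 ≤ ℓ then aeval (dynkinAdj C) (S ℤ (ℓ - 1)) else 0

theorem qCartanInvCoeff_sub_one_add_qCartanInvCoeff_add_one (C : Matrix (Fin n) (Fin n) ℤ)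
    (ℓ : ℤ) :
    qCartanInvCoeff C (ℓ - 1) + qCartanInvCoeff C (ℓ + 1) - dynkinAdj C * qCartanInvCoeff C ℓ
      = if ℓ = 0 then 1 else 0 := by
  unfold qCartanInvCoeff
  rcases lt_trichotomy ℓ 0 with hℓ | rfl | hℓ
  · rw [if_neg (by omega), if_neg hℓ.not_ge, if_neg hℓ.ne, mul_zero, zero_add, sub_zero]
    split_ifs
    · rw [show ℓ + 1 - 1 = -1 by omega, S_neg_one, map_zero]
    · rfl
  · simp
  · rw [if_pos (by omega), if_pos (by omega), if_pos hℓ.le, if_neg hℓ.ne', add_sub_cancel_right,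
      S_sub_one ℤ (ℓ - 1), map_sub, map_mul, aeval_X, sub_add_cancel]
    abel

theorem bddBelow_support_qCartanInvCoeff (C : Matrix (Fin n) (Fin n) ℤ) (i j : Fin n) :
    BddBelow (Function.support fun ℓ => (qCartanInvCoeff C ℓ i j : ℚ)) :=
  ⟨0, fun ℓ hℓ => by
    by_contra h
    simp [qCartanInvCoeff, show ¬ 0 ≤ ℓ by omega] at hℓ⟩

noncomputable def qCartanInv (C : Matrix (Fin n) (Fin n) ℤ) :
    Matrix (Fin n) (Fin n) (LaurentSeries ℚ) :=
  Matrix.of fun i j => HahnSeries.ofSuppBddBelow _ (bddBelow_support_qCartanInvCoeff C i j)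

theorem qCartan_eq (C : Matrix (Fin n) (Fin n) ℤ) (hdiag : ∀ i, C i i = 2) :
    qCartan C = (HahnSeries.single 1 1 + HahnSeries.single (-1) 1 : LaurentSeries ℚ) • 1
      - (dynkinAdj C).map (↑) := by
  refine Matrix.ext fun i j => ?_
  by_cases hij : i = j
  · subst hij; simp [qCartan, dynkinAdj, hdiag, Matrix.ofNat_apply]
  · simp [qCartan, dynkinAdj, hij, Matrix.ofNat_apply]

theorem qCartan_mul_qCartanInv (C : Matrix (Fin n) (Fin n) ℤ) (hdiag : ∀ i, C i i = 2) :
    qCartan C * qCartanInv C = 1 := by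
  ext i j ℓ
  have key := congr_fun (congr_fun (qCartanInvCoeff_sub_one_add_qCartanInvCoeff_add_one C ℓ) i) j
  have hone : ((1 : Matrix (Fin n) (Fin n) (LaurentSeries ℚ)) i j).coeff ℓ
      = ((if ℓ = 0 then 1 else 0 : Matrix (Fin n) (Fin n) ℤ) i j : ℚ) := by
    by_cases hℓ : ℓ = 0 <;> by_cases hij : i = j <;> simp [hℓ, hij, Matrix.one_apply]
  rw [qCartan_eq C hdiag, Matrix.sub_mul, Matrix.smul_mul, Matrix.one_mul, hone, ← key]
  simp only [Matrix.sub_apply, Matrix.smul_apply, Matrix.mul_apply, Matrix.map_apply,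
    Matrix.add_apply, smul_eq_mul, add_mul, HahnSeries.coeff_sub, HahnSeries.coeff_add,
    HahnSeries.coeff_sum, HahnSeries.coeff_single_mul, one_mul, LaurentSeries.coeff_intCast_mul,
    qCartanInv, Matrix.of_apply, HahnSeries.coeff_ofSuppBddBelow, sub_neg_eq_add]
  push_cast
  rfl

theorem coeff_qCartan_inv (C : Matrix (Fin n) (Fin n) ℤ) (hdiag : ∀ i, C i i = 2) (i j : Fin n)
    (m : ℕ) : ((qCartan C)⁻¹ i j).coeff m = (aeval (dynkinAdj C) (S ℤ (m - 1)) i j : ℚ) := by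
  rw [Matrix.inv_eq_right_inv (qCartan_mul_qCartanInv C hdiag)]
  simp [qCartanInv, qCartanInvCoeff]

end InverseQuantumCartan

theorem statement6_general {n : ℕ} (C : Matrix (Fin n) (Fin n) ℤ)
    (hC : IsADECartan C) (ct : Fin n → Fin n → ℤ → ℤ)
    (hct : ∀ i j ℓ, ((qCartan C)⁻¹ i j).coeff ℓ = (ct i j ℓ : ℚ))
    (h : ℕ) (hper : (coxeterElem C)^[h] = id) :
    ∀ (i j : Fin n) (k : ℕ), 1 ≤ k → ct i j ((k * h : ℕ) : ℤ) = 0 := by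
  intro i j k _
  obtain ⟨q, hq⟩ := S_sub_one_dvd_S_mul_sub_one (R := ℤ) h k
  have hvanish : aeval (dynkinAdj C) (S ℤ ((k * h : ℕ) - 1)) = 0 := by
    rw [Nat.cast_mul, hq, map_mul,
      aeval_dynkinAdj_S_eq_zero hC (coxeterMatrix_pow_eq_one C hper), zero_mul]
  have hcoeff := hct i j (k * h : ℕ)
  rw [coeff_qCartan_inv C hC.diag, hvanish] at hcoeff
  exact_mod_cast hcoeff.symm

/-- Vanishing at multiples of the Coxeter number: `c̃_{ij}(kh) = 0`
for all `i, j` and all integers `k ≥ 1`. -/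
theorem statement6 {n : ℕ} (hn : 0 < n) (C : Matrix (Fin n) (Fin n) ℤ)
    (hC : IsADECartan C) (ct : Fin n → Fin n → ℤ → ℤ)
    (hct : ∀ i j ℓ, ((qCartan C)⁻¹ i j).coeff ℓ = (ct i j ℓ : ℚ))
    (h : ℕ) (hpos : 0 < h) (hper : (coxeterElem C)^[h] = id)
    (hmin : ∀ k : ℕ, 0 < k → k < h → (coxeterElem C)^[k] ≠ id) :
    ∀ (i j : Fin n) (k : ℕ), 1 ≤ k → ct i j ((k * h : ℕ) : ℤ) = 0 :=
  statement6_general C hC ct hct h hper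
end

section
/- Fix a parity function ε: I → {0,1} with ε_i ≠ ε_j whenever c_{ij} = −1. Then c̃_{ij}(ℓ) = 0 unless ℓ + ε_i + ε_j is odd (i.e. ℓ + ε_i + ε_j + 1 ∈ 2Z). -/
/-!
Substituting `z ↦ -z` turns the quantum Cartan matrix into `-E C(z) E` with
`E = diag((-1)^{ε_i})`: the diagonal entries `z + z⁻¹` change sign, and an off-diagonal
entry `-1` sits between two vertices of opposite parity, where `E` contributes `-1`.
Inverting, `(-1)^ℓ c̃_{ij}(ℓ) = -(-1)^{ε_i + ε_j} c̃_{ij}(ℓ)`, so `c̃_{ij}(ℓ) = 0`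
whenever `ℓ + ε_i + ε_j` is even.
-/

open Matrix

namespace HahnSeries

variable {Γ R : Type*} [AddCommMonoid Γ] [PartialOrder Γ] [IsOrderedCancelAddMonoid Γ]
  [CommSemiring R]

def twist (χ : Multiplicative Γ →* Rˣ) : HahnSeries Γ R →+* HahnSeries Γ R where
  toFun x :=
    { coeff a := χ (.ofAdd a) * x.coeff a
      isPWO_support' := x.isPWO_support.mono (Function.support_mul_subset_right _ _) }
  map_one' := by
    ext a
    by_cases h : a = 0 <;> simp [coeff_one, h]
  map_mul' x y := by
    ext a
    have hsupp : ∀ z : HahnSeries Γ R,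
        Function.support (fun a => (χ (.ofAdd a) : R) * z.coeff a) = z.support := fun z => by
      ext; simp [Units.mul_right_eq_zero]
    simp only [coeff_mul, Finset.mul_sum]
    refine Finset.sum_congr (by congr 1 <;> exact (hsupp _).symm) fun ij hij => ?_
    rw [← (Finset.mem_antidiagonal.mp hij).2.2, ofAdd_add, map_mul, Units.val_mul]
    ring
  map_zero' := by ext; simp
  map_add' x y := by ext; simp [mul_add]

theorem coeff_twist (χ : Multiplicative Γ →* Rˣ) (x : HahnSeries Γ R) (a : Γ) :
    (twist χ x).coeff a = χ (.ofAdd a) * x.coeff a := rfl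

theorem twist_single (χ : Multiplicative Γ →* Rˣ) (a : Γ) (r : R) :
    twist χ (single a r) = single a (χ (.ofAdd a) * r) := by
  ext b
  by_cases h : b = a <;> simp [coeff_twist, h]

end HahnSeries

namespace LaurentSeries

variable {R : Type*} [CommRing R]

/-- The substitution `z ↦ -z`, as the twist by the character `n ↦ (-1)^n`. -/
noncomputable def negVar : LaurentSeries R →+* LaurentSeries R :=
  HahnSeries.twist <| (Units.map (Int.castRingHom R).toMonoidHom).comp (zpowersHom ℤˣ (-1))

theorem coeff_negVar (f : LaurentSeries R) (n : ℤ) :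
    (negVar f).coeff n = (n.negOnePow : R) * f.coeff n := rfl

theorem negVar_single (n : ℤ) (r : R) :
    negVar (HahnSeries.single n r) = HahnSeries.single n ((n.negOnePow : R) * r) :=
  HahnSeries.twist_single _ n r

end LaurentSeries

theorem RingHom.map_nonsing_inv {n R S : Type*} [Fintype n] [DecidableEq n] [CommRing R]
    [CommRing S] (f : R →+* S) [IsLocalHom f] (A : Matrix n n R) :
    A⁻¹.map f = (A.map f)⁻¹ := by
  by_cases h : IsUnit A.det
  · refine (inv_eq_right_inv ?_).symm
    rw [← Matrix.map_mul, mul_nonsing_inv A h, Matrix.map_one f (map_zero f) (map_one f)]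
  · have h' : ¬IsUnit (A.map f).det := by
      rwa [← RingHom.mapMatrix_apply, ← f.map_det, isUnit_map_iff]
    rw [nonsing_inv_apply_not_isUnit A h, nonsing_inv_apply_not_isUnit _ h',
      Matrix.map_zero f (map_zero f)]

theorem Matrix.inv_neg_conj {n R : Type*} [Fintype n] [DecidableEq n] [CommRing R]
    {E : Matrix n n R} (hE : E * E = 1) (A : Matrix n n R) :
    (-(E * A * E))⁻¹ = -(E * A⁻¹ * E) := by
  have hE' : (-E) * (-E) = 1 := by rw [neg_mul_neg, hE]
  rw [← neg_mul, ← neg_mul, Matrix.mul_inv_rev, Matrix.mul_inv_rev, inv_eq_left_inv hE,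
    inv_eq_left_inv hE', mul_neg, mul_neg, Matrix.mul_assoc]

section SignDiagonal

variable {n R : Type*} [Fintype n] [DecidableEq n] [CommRing R]

def signDiagonal (ε : n → ℤ) : Matrix n n R :=
  diagonal fun i => ((ε i).negOnePow : R)

theorem signDiagonal_mul_self (ε : n → ℤ) :
    signDiagonal ε * signDiagonal ε = (1 : Matrix n n R) := by
  rw [signDiagonal, diagonal_mul_diagonal, ← diagonal_one]
  congr 1
  funext i
  rw [← Int.cast_mul, ← Units.val_mul, Int.units_mul_self, Units.val_one, Int.cast_one]

theorem signDiagonal_mul_mul_apply (ε : n → ℤ) (M : Matrix n n R) (i j : n) :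
    (signDiagonal ε * M * signDiagonal ε : Matrix n n R) i j =
      (ε i + ε j).negOnePow • M i j := by
  rw [signDiagonal, mul_diagonal, diagonal_mul, Int.negOnePow_add, Units.smul_def,
    Units.val_mul, mul_smul, zsmul_eq_mul, zsmul_eq_mul]
  ring

end SignDiagonal

theorem qCartan_map_negVar {n : ℕ} {C : Matrix (Fin n) (Fin n) ℤ}
    (hoff : ∀ i j, i ≠ j → C i j = 0 ∨ C i j = -1) {ε : Fin n → ℤ}
    (hε01 : ∀ i, ε i = 0 ∨ ε i = 1) (hεadj : ∀ i j, C i j = -1 → ε i ≠ ε j) :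
    (qCartan C).map LaurentSeries.negVar = -(signDiagonal ε * qCartan C * signDiagonal ε) := by
  ext a b : 2
  rw [map_apply, neg_apply, signDiagonal_mul_mul_apply, qCartan, of_apply]
  rcases eq_or_ne a b with rfl | hab
  · simp [LaurentSeries.negVar_single, Int.negOnePow_even _ (Even.add_self _),
      HahnSeries.single_neg, add_comm]
  rw [if_neg hab]
  rcases hoff a b hab with h | h
  · simp [h]
  have hodd : Odd (ε a + ε b) :=
    Int.odd_iff.mpr (by have := hεadj a b h; have := hε01 a; have := hε01 b; omega)
  simp [h, Int.negOnePow_odd _ hodd]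

theorem statement8_general {n : ℕ} (C : Matrix (Fin n) (Fin n) ℤ)
    (hC : IsADECartan C) (ct : Fin n → Fin n → ℤ → ℤ)
    (hct : ∀ i j ℓ, ((qCartan C)⁻¹ i j).coeff ℓ = (ct i j ℓ : ℚ))
    (ε : Fin n → ℤ) (hε01 : ∀ i, ε i = 0 ∨ ε i = 1)
    (hεadj : ∀ i j, C i j = -1 → ε i ≠ ε j) :
    ∀ (i j : Fin n) (ℓ : ℤ), 1 ≤ ℓ → ¬ Odd (ℓ + ε i + ε j) → ct i j ℓ = 0 := by
  intro i j ℓ _ hℓ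
  have hinv : (qCartan C)⁻¹.map LaurentSeries.negVar =
      -(signDiagonal ε * (qCartan C)⁻¹ * signDiagonal ε) := by
    rw [RingHom.map_nonsing_inv, qCartan_map_negVar hC.offdiag hε01 hεadj,
      inv_neg_conj (signDiagonal_mul_self ε)]
  have hsign : (ε i + ε j).negOnePow = ℓ.negOnePow :=
    (Int.negOnePow_eq_iff _ _).mpr (by rw [Int.not_odd_iff_even] at hℓ; grind)
  have hentry := congrFun₂ hinv i j
  rw [map_apply, neg_apply, signDiagonal_mul_mul_apply, hsign] at hentry
  have hcoeff := congrArg (HahnSeries.coeff · ℓ) hentry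
  rw [LaurentSeries.coeff_negVar, HahnSeries.coeff_neg, Units.smul_def, HahnSeries.coeff_smul,
    hct, zsmul_eq_mul] at hcoeff
  have hzero : ((ℓ.negOnePow : ℤ) : ℚ) * ct i j ℓ = 0 := by linarith
  simpa using hzero

/-- Parity vanishing: fixing a parity function `ε : I → {0,1}` with
`ε_i ≠ ε_j` whenever `c_{ij} = -1`, one has `c̃_{ij}(ℓ) = 0` unless `ℓ + ε_i + ε_j`
is odd. -/
theorem statement8 {n : ℕ} (hn : 0 < n) (C : Matrix (Fin n) (Fin n) ℤ)
    (hC : IsADECartan C) (ct : Fin n → Fin n → ℤ → ℤ)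
    (hct : ∀ i j ℓ, ((qCartan C)⁻¹ i j).coeff ℓ = (ct i j ℓ : ℚ))
    (ε : Fin n → ℤ) (hε01 : ∀ i, ε i = 0 ∨ ε i = 1)
    (hεadj : ∀ i j, C i j = -1 → ε i ≠ ε j) :
    ∀ (i j : Fin n) (ℓ : ℤ), 1 ≤ ℓ → ¬ Odd (ℓ + ε i + ε j) → ct i j ℓ = 0 :=
  statement8_general C hC ct hct ε hε01 hεadj
end

section
/- Let D_Q be the bounded derived category of finite-dimensional representations of a Dynkin quiver Q of type ADE, and let H_Q: C(Δ) → ind(D_Q) be Happel's bijection on vertices of the repetition quiver Δ. For (i,p), (j,r) ∈ Δ₀ with r ≥ p, the Euler characteristic ⟨H_Q(i,p), H_Q(j,r)⟩ = Σ_k (−1)^k dim Ext^k_{D_Q}(H_Q(i,p), H_Q(j,r)) equals c̃_{ij}(r − p + 1). -/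
open Matrix

/-- The dimension vector `γ_i` of the injective hull `I_i` of the simple `S_i` over a
Dynkin quiver with arrow relation `ar`: the sum of the simple roots `α_j` over all
vertices `j` admitting an oriented path from `j` to `i`. -/
noncomputable def gammaVec {n : ℕ} (ar : Fin n → Fin n → Prop) (i : Fin n) : Fin n → ℤ :=
  fun k => Set.indicator {k' | Relation.ReflTransGen ar k' i} (fun _ => 1) k

/-- The `k`-th term `(-1)^k · dim Ext^k` of the Euler characteristic. -/
def eulerTerm (f : ℤ → ℕ) (k : ℤ) : ℤ := if Even k then (f k : ℤ) else -(f k : ℤ)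

/-- The Euler–Poincaré characteristic `⟨X, Y⟩ = Σ_k (-1)^k dim Ext^k(X, Y)`. -/
noncomputable def eulerSum (f : ℤ → ℕ) : ℤ := ∑ᶠ k : ℤ, eulerTerm f k

/-- Data recording the homological structure of the bounded derived category
`D_Q = D^b(ℂQ-mod)` of a Dynkin quiver `Q` of type `ADE`, together with Happel's
bijection `H_Q` from the repetition quiver vertices `(i,p)` to the indecomposable
objects of `D_Q`, `H_Q(i,p) = τ^{(ξ_i-p)/2}(I_i)`.

* `ext x y k` is `dim Ext^k_{D_Q}(H_Q x, H_Q y)` and `dv x` is the (signed) dimension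
  vector of `H_Q x`.
* `hdv_inj` : `H_Q(i, ξ_i) = I_i` has dimension vector `γ_i`.
* `hdv_tau` : the Auslander–Reiten translate acts on dimension vectors by the Coxeter
  transformation `τ`.
* `hshift` : the shift formula `H_Q(j,r)[1] ≅ H_Q(j*, r + h)`, so that
  `Ext^{k+1}(x, (j,r)) = Ext^k(x, (j*, r+h))`.
* `hhom_lb`, `hhom_ub` : nonzero morphisms `H_Q(i,p) → H_Q(j,r)` exist only when
  `p ≤ r ≤ p + h - 2` (Happel's description of `Hom` in `D_Q`).
* `hAR` : the Auslander–Reiten duality `Ext¹(X, Y) ≅ Hom(Y, τX)^*`.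
* `heuler_tau` : `⟨τX, τY⟩ = ⟨X, Y⟩`.
* `heuler_inj` : `⟨X, I_j⟩ = (dim X, ϖ_j)`. -/
structure HappelExtData (n : ℕ) (ar : Fin n → Fin n → Prop) (ξ : Fin n → ℤ)
    (star : Fin n → Fin n) (h : ℕ) (τ : (Fin n → ℤ) → Fin n → ℤ) where
  ext : (Fin n × ℤ) → (Fin n × ℤ) → ℤ → ℕ
  dv : (Fin n × ℤ) → Fin n → ℤ
  hfin : ∀ x y, (Function.support fun k => ext x y k).Finite
  hdv_inj : ∀ i : Fin n, dv (i, ξ i) = gammaVec ar i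
  hdv_tau : ∀ x : Fin n × ℤ, dv (x.1, x.2 - 2) = τ (dv x)
  hshift : ∀ (x y : Fin n × ℤ) (k : ℤ), ext x y (k + 1) = ext x (star y.1, y.2 + (h : ℤ)) k
  hhom_lb : ∀ x y : Fin n × ℤ, ext x y 0 ≠ 0 → x.2 ≤ y.2
  hhom_ub : ∀ x y : Fin n × ℤ, ext x y 0 ≠ 0 → y.2 ≤ x.2 + (h : ℤ) - 2
  hAR : ∀ x y : Fin n × ℤ, ext x y 1 = ext y (x.1, x.2 - 2) 0
  heuler_tau : ∀ x y : Fin n × ℤ,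
    eulerSum (ext (x.1, x.2 - 2) (y.1, y.2 - 2)) = eulerSum (ext x y)
  heuler_inj : ∀ (x : Fin n × ℤ) (j : Fin n), eulerSum (ext x (j, ξ j)) = dv x j

open scoped Classical

namespace Stmt10

variable {n : ℕ}

lemma coxeterOf_cons (C : Matrix (Fin n) (Fin n) ℤ) (a : Fin n) (l : List (Fin n)) :
    coxeterOf C (a :: l) = simpleRefl C a ∘ coxeterOf C l := rfl

lemma coxeterOf_append (C : Matrix (Fin n) (Fin n) ℤ) (l₁ l₂ : List (Fin n)) :
    coxeterOf C (l₁ ++ l₂) = coxeterOf C l₁ ∘ coxeterOf C l₂ := by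
  induction l₁ with
  | nil => rfl
  | cons a l ih =>
      simp only [List.cons_append, coxeterOf_cons, ih]
      rfl

lemma simpleRefl_apply_ne (C : Matrix (Fin n) (Fin n) ℤ) (a : Fin n) (v : Fin n → ℤ)
    {k : Fin n} (hk : k ≠ a) : simpleRefl C a v k = v k := by
  simp [simpleRefl, hk]

lemma coxeterOf_apply_not_mem (C : Matrix (Fin n) (Fin n) ℤ) {l : List (Fin n)}
    {k : Fin n} (hk : k ∉ l) (v : Fin n → ℤ) : coxeterOf C l v k = v k := by
  induction l with
  | nil => rfl
  | cons a l ih =>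
      have hka : k ≠ a := fun hh => hk (hh ▸ List.mem_cons_self)
      have hkl : k ∉ l := fun hh => hk (List.mem_cons_of_mem a hh)
      rw [coxeterOf_cons]
      simp only [Function.comp_apply]
      rw [simpleRefl_apply_ne C a _ hka, ih hkl]

end Stmt10
namespace Stmt10

variable {n : ℕ} {C : Matrix (Fin n) (Fin n) ℤ} {ar : Fin n → Fin n → Prop}
  {ξ : Fin n → ℤ} {L : List (Fin n)}

/-- adjacency decomposition of off-diagonal Cartan entries -/
lemma adj_decomp (hC : IsADECartan C) (har : ∀ i j, ar i j → C i j = -1)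
    (harx : ∀ i j, i ≠ j → C i j = -1 → Xor' (ar i j) (ar j i))
    {j k : Fin n} (hjk : j ≠ k) :
    C j k = -(((if ar k j then (1:ℤ) else 0)) + (if ar j k then (1:ℤ) else 0)) := by
  rcases hC.offdiag j k hjk with h0 | h1
  · have h1 : ¬ ar j k := fun hh => by simp [har _ _ hh] at h0
    have h2 : ¬ ar k j := fun hh => by
      have := har _ _ hh
      rw [hC.symm k j] at this
      simp [this] at h0
    simp [h0, h1, h2]
  · rcases harx j k hjk h1 with ⟨hjk', hkj'⟩ | ⟨hkj', hjk'⟩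
    · simp [h1, hjk', hkj']
    · simp [h1, hjk', hkj']

lemma not_ar_self (hC : IsADECartan C) (har : ∀ i j, ar i j → C i j = -1) (a : Fin n) :
    ¬ ar a a := fun hh => by
  have := har _ _ hh; rw [hC.diag a] at this; norm_num at this

/-- The mesh relation for an adapted Coxeter element. -/
lemma mesh (hC : IsADECartan C) (har : ∀ i j, ar i j → C i j = -1)
    (harx : ∀ i j, i ≠ j → C i j = -1 → Xor' (ar i j) (ar j i))
    (hξ : ∀ i j, ar i j → ξ i = ξ j + 1)
    (hL1 : ∀ i, i ∈ L) (hL2 : L.Nodup) (hL3 : (L.map ξ).Chain' (· ≥ ·))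
    (v : Fin n → ℤ) (k : Fin n) :
    coxeterOf C L v k + v k
      = (∑ u, if ar k u then coxeterOf C L v u else 0)
        + (∑ u, if ar u k then v u else 0) := by
  obtain ⟨L₁, L₂, rfl⟩ := List.append_of_mem (hL1 k)
  -- nodup facts
  rw [List.nodup_append] at hL2
  obtain ⟨hn1, hn2, hdisj⟩ := hL2
  have hkL1 : k ∉ L₁ := fun hh => hdisj k hh k List.mem_cons_self rfl
  have hkL2 : k ∉ L₂ := (List.nodup_cons.mp hn2).1
  -- order facts
  have hpw : (L₁ ++ k :: L₂).Pairwise (fun a b => ξ b ≤ ξ a) := by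
    have h' := List.isChain_iff_pairwise.mp hL3
    rw [List.pairwise_map] at h'
    exact h'
  rw [List.pairwise_append] at hpw
  obtain ⟨hpw1, hpw2, hcross⟩ := hpw
  have hL1ge : ∀ u ∈ L₁, ξ k ≤ ξ u := fun u hu => hcross u hu k List.mem_cons_self
  have hL2le : ∀ u ∈ L₂, ξ u ≤ ξ k := (List.pairwise_cons.mp hpw2).1
  -- membership of neighbours
  have memlow : ∀ u, ar k u → u ∈ L₂ := by
    intro u hu
    have hxu : ξ u = ξ k - 1 := by have := hξ k u hu; omega
    have hne : u ≠ k := by intro hh; rw [hh] at hxu; omega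
    rcases List.mem_append.mp (hL1 u) with h | h
    · exact absurd (hL1ge u h) (by omega)
    · rcases List.mem_cons.mp h with h | h
      · exact absurd h hne
      · exact h
  have memhigh : ∀ u, ar u k → u ∈ L₁ := by
    intro u hu
    have hxu : ξ u = ξ k + 1 := by have := hξ u k hu; omega
    have hne : u ≠ k := by intro hh; rw [hh] at hxu; omega
    rcases List.mem_append.mp (hL1 u) with h | h
    · exact h
    · rcases List.mem_cons.mp h with h | h
      · exact absurd h hne
      · exact absurd (hL2le u h) (by omega)
  set w : Fin n → ℤ := coxeterOf C L₂ v with hw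
  have hsplit : ∀ x : Fin n → ℤ,
      coxeterOf C (L₁ ++ k :: L₂) x = coxeterOf C L₁ (simpleRefl C k (coxeterOf C L₂ x)) := by
    intro x
    rw [coxeterOf_append, coxeterOf_cons]
    rfl
  set tv : Fin n → ℤ := coxeterOf C (L₁ ++ k :: L₂) v with htv
  -- coordinate k
  have hk1 : tv k = simpleRefl C k w k := by
    rw [htv, hsplit, coxeterOf_apply_not_mem C hkL1]
  have hwk : w k = v k := coxeterOf_apply_not_mem C hkL2 v
  -- low neighbours
  have hlow : ∀ u, ar k u → tv u = w u := by
    intro u hu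
    have huL2 : u ∈ L₂ := memlow u hu
    have huL1 : u ∉ L₁ := fun hh => hdisj u hh u (List.mem_cons_of_mem k huL2) rfl
    have hune : u ≠ k := fun hh => hkL2 (hh ▸ huL2)
    rw [htv, hsplit, coxeterOf_apply_not_mem C huL1, simpleRefl_apply_ne C k _ hune]
  -- high neighbours
  have hhigh : ∀ u, ar u k → w u = v u := by
    intro u hu
    have huL1 : u ∈ L₁ := memhigh u hu
    have huL2 : u ∉ L₂ := fun hh => hdisj u huL1 u (List.mem_cons_of_mem k hh) rfl
    exact coxeterOf_apply_not_mem C huL2 v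
  -- expand the reflection at k
  have hsum : ∑ j, C j k * w j
      = 2 * w k - ((∑ u, if ar k u then w u else 0) + (∑ u, if ar u k then w u else 0)) := by
    rw [← Finset.add_sum_erase _ _ (Finset.mem_univ k), hC.diag k]
    have : ∑ j ∈ Finset.univ.erase k, C j k * w j
        = ∑ j ∈ Finset.univ.erase k,
            (-(((if ar k j then (1:ℤ) else 0)) + (if ar j k then (1:ℤ) else 0)) * w j) := by
      refine Finset.sum_congr rfl fun j hj => ?_
      rw [adj_decomp hC har harx (Finset.ne_of_mem_erase hj)]
    rw [this]
    have e1 : ∀ S : Finset (Fin n), ∑ j ∈ S,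
        (-(((if ar k j then (1:ℤ) else 0)) + (if ar j k then (1:ℤ) else 0)) * w j)
        = -((∑ j ∈ S, if ar k j then w j else 0) + (∑ j ∈ S, if ar j k then w j else 0)) := by
      intro S
      rw [← Finset.sum_add_distrib, ← Finset.sum_neg_distrib]
      refine Finset.sum_congr rfl fun j _ => ?_
      by_cases h1 : ar k j <;> by_cases h2 : ar j k <;> simp [h1, h2] <;> ring
    rw [e1]
    have e2 : ∑ j ∈ Finset.univ.erase k, (if ar k j then w j else 0)
        = ∑ j, if ar k j then w j else 0 := by
      apply Finset.sum_erase
      simp [not_ar_self hC har k]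
    have e3 : ∑ j ∈ Finset.univ.erase k, (if ar j k then w j else 0)
        = ∑ j, if ar j k then w j else 0 := by
      apply Finset.sum_erase
      simp [not_ar_self hC har k]
    rw [e2, e3]
    ring
  have hrefl : simpleRefl C k w k = w k - ∑ j, C j k * w j := by
    simp [simpleRefl]
  have sum1 : (∑ u, if ar k u then w u else 0) = ∑ u, if ar k u then tv u else 0 := by
    refine Finset.sum_congr rfl fun u _ => ?_
    by_cases h1 : ar k u
    · simp [h1, hlow u h1]
    · simp [h1]
  have sum2 : (∑ u, if ar u k then w u else 0) = ∑ u, if ar u k then v u else 0 := by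
    refine Finset.sum_congr rfl fun u _ => ?_
    by_cases h1 : ar u k
    · simp [h1, hhigh u h1]
    · simp [h1]
  rw [hk1, hrefl, hsum, hwk] at *
  rw [sum1, sum2] at *
  ring

end Stmt10
namespace Stmt10

variable {n : ℕ} {C : Matrix (Fin n) (Fin n) ℤ} {ar : Fin n → Fin n → Prop}
  {ξ : Fin n → ℤ}

lemma path_le (hξ : ∀ i j, ar i j → ξ i = ξ j + 1) {a b : Fin n}
    (hp : Relation.ReflTransGen ar a b) : a = b ∨ ξ b < ξ a := by
  induction hp with
  | refl => exact Or.inl rfl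
  | tail h1 h2 ih =>
      rename_i b' c'
      have hx := hξ _ _ h2
      rcases ih with h | h
      · right; rw [h]; omega
      · right; omega

lemma gammaVec_apply (i k : Fin n) :
    gammaVec ar i k = if Relation.ReflTransGen ar k i then 1 else 0 := by
  simp [gammaVec, Set.indicator_apply, Set.mem_setOf_eq]

/-- uniqueness of the first step of a path towards `i` (tree property). -/
lemma uop (hC : IsADECartan C) (har : ∀ i j, ar i j → C i j = -1)
    (hξ : ∀ i j, ar i j → ξ i = ξ j + 1)
    {k i : Fin n} (hki : k ≠ i) (hpath : Relation.ReflTransGen ar k i)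
    {u₁ u₂ : Fin n} (h1 : ar k u₁ ∧ Relation.ReflTransGen ar u₁ i)
    (h2 : ar k u₂ ∧ Relation.ReflTransGen ar u₂ i) : u₁ = u₂ := by
  by_contra hne
  -- the set of vertices with a path to i
  set U : Finset (Fin n) := Finset.univ.filter (fun a => Relation.ReflTransGen ar a i) with hU
  have hiU : i ∈ U := by simp only [hU, Finset.mem_filter, Finset.mem_univ, true_and]; exact Relation.ReflTransGen.refl
  have hmemU : ∀ a, a ∈ U ↔ Relation.ReflTransGen ar a i := fun a => by simp [hU]
  -- a choice of next step
  have hex : ∀ a : Fin n, ∃ u : Fin n,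
      (a ≠ i → Relation.ReflTransGen ar a i → ar a u ∧ Relation.ReflTransGen ar u i) := by
    intro a
    by_cases hcase : a ≠ i ∧ Relation.ReflTransGen ar a i
    · obtain ⟨u, hu1, hu2⟩ := (Relation.ReflTransGen.cases_head hcase.2).resolve_left hcase.1
      exact ⟨u, fun _ _ => ⟨hu1, hu2⟩⟩
    · exact ⟨a, fun hh1 hh2 => absurd ⟨hh1, hh2⟩ hcase⟩
  choose nxt hnxt using hex
  set u' : Fin n := if nxt k = u₁ then u₂ else u₁ with hu'
  have hu'prop : ar k u' ∧ Relation.ReflTransGen ar u' i ∧ u' ≠ nxt k := by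
    by_cases hcase : nxt k = u₁
    · simp only [hu', if_pos hcase]
      exact ⟨h2.1, h2.2, by rw [hcase]; exact fun hh => hne hh.symm⟩
    · simp only [hu', if_neg hcase]
      exact ⟨h1.1, h1.2, fun hh => hcase hh.symm⟩
  -- the injection
  set F : Fin n → Fin n × Fin n := fun a => if a = i then (k, u') else (a, nxt a) with hF
  set S : Finset (Fin n × Fin n) :=
    Finset.univ.filter (fun p => p.1 ∈ U ∧ p.2 ∈ U ∧ ar p.1 p.2) with hS
  have hmaps : ∀ a ∈ U, F a ∈ S := by
    intro a ha
    by_cases hai : a = i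
    · simp only [hF, if_pos hai, hS, Finset.mem_filter, Finset.mem_univ, true_and]
      exact ⟨(hmemU k).mpr hpath, (hmemU u').mpr hu'prop.2.1, hu'prop.1⟩
    · have hpa := (hmemU a).mp ha
      obtain ⟨hn1, hn2⟩ := hnxt a hai hpa
      simp only [hF, if_neg hai, hS, Finset.mem_filter, Finset.mem_univ, true_and]
      exact ⟨ha, (hmemU _).mpr hn2, hn1⟩
  have hinj : ∀ a ∈ U, ∀ b ∈ U, F a = F b → a = b := by
    intro a _ b _ hab
    by_cases hai : a = i <;> by_cases hbi : b = i
    · rw [hai, hbi]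
    · exfalso
      simp only [hF, if_pos hai, if_neg hbi] at hab
      have h1' : k = b := congrArg Prod.fst hab
      have h2' : u' = nxt b := congrArg Prod.snd hab
      rw [← h1'] at h2'
      exact hu'prop.2.2 h2'
    · exfalso
      simp only [hF, if_neg hai, if_pos hbi] at hab
      have h1' : a = k := congrArg Prod.fst hab
      have h2' : nxt a = u' := congrArg Prod.snd hab
      rw [h1'] at h2'
      exact hu'prop.2.2 h2'.symm
    · simp only [hF, if_neg hai, if_neg hbi] at hab
      exact congrArg Prod.fst hab
  have hcard1 : U.card ≤ S.card := Finset.card_le_card_of_injOn F hmaps hinj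
  -- double the edges by symmetry
  set Sord : Finset (Fin n × Fin n) :=
    Finset.univ.filter (fun p => p.1 ∈ U ∧ p.2 ∈ U ∧ p.1 ≠ p.2 ∧ C p.1 p.2 = -1) with hSord
  have hSsub : S ⊆ Sord := by
    intro p hp
    simp only [hS, Finset.mem_filter, Finset.mem_univ, true_and] at hp
    simp only [hSord, Finset.mem_filter, Finset.mem_univ, true_and]
    refine ⟨hp.1, hp.2.1, ?_, har _ _ hp.2.2⟩
    intro hh
    exact not_ar_self hC har p.1 (hh ▸ hp.2.2)
  have hSwapsub : S.image Prod.swap ⊆ Sord := by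
    intro p hp
    obtain ⟨q, hq, rfl⟩ := Finset.mem_image.mp hp
    simp only [hS, Finset.mem_filter, Finset.mem_univ, true_and] at hq
    simp only [hSord, Finset.mem_filter, Finset.mem_univ, true_and, Prod.fst_swap, Prod.snd_swap]
    refine ⟨hq.2.1, hq.1, ?_, ?_⟩
    · intro hh
      exact not_ar_self hC har q.1 (hh ▸ hq.2.2)
    · rw [hC.symm]; exact har _ _ hq.2.2
  have hdisjSS : Disjoint S (S.image Prod.swap) := by
    rw [Finset.disjoint_left]
    intro p hp hp'
    obtain ⟨q, hq, hqp⟩ := Finset.mem_image.mp hp'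
    simp only [hS, Finset.mem_filter, Finset.mem_univ, true_and] at hp hq
    have har1 : ar p.1 p.2 := hp.2.2
    have har2 : ar p.2 p.1 := by
      have : q.1 = p.2 ∧ q.2 = p.1 := by
        constructor
        · exact congrArg Prod.snd hqp
        · exact congrArg Prod.fst hqp
      rw [← this.1, ← this.2]; exact hq.2.2
    have e1 := hξ _ _ har1
    have e2 := hξ _ _ har2
    omega
  have hcard2 : 2 * S.card ≤ Sord.card := by
    have := Finset.card_le_card (Finset.union_subset hSsub hSwapsub)
    rw [Finset.card_union_of_disjoint hdisjSS] at this
    have hswapcard : (S.image Prod.swap).card = S.card :=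
      Finset.card_image_of_injective S Prod.swap_injective
    omega
  -- the quadratic form value
  have hQle : (∑ a ∈ U, ∑ b ∈ U, C a b) ≤ 0 := by
    have hsplit : ∀ a ∈ U, ∑ b ∈ U, C a b = 2 + ∑ b ∈ U.erase a, C a b := by
      intro a ha
      rw [← Finset.add_sum_erase _ _ ha, hC.diag a]
    rw [Finset.sum_congr rfl hsplit, Finset.sum_add_distrib, Finset.sum_const, nsmul_eq_mul]
    have hpairs : ∑ a ∈ U, ∑ b ∈ U.erase a, C a b = ∑ p ∈ (U ×ˢ U).filter
        (fun p => p.1 ≠ p.2), C p.1 p.2 := by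
      rw [Finset.sum_sigma' U (fun a => U.erase a) (fun a b => C a b)]
      apply Finset.sum_nbij' (fun x => (x.1, x.2)) (fun p => ⟨p.1, p.2⟩)
      · intro x hx
        simp only [Finset.mem_sigma, Finset.mem_erase] at hx
        simp only [Finset.mem_filter, Finset.mem_product]
        exact ⟨⟨hx.1, hx.2.2⟩, fun hh => hx.2.1 hh.symm⟩
      · intro p hp
        simp only [Finset.mem_filter, Finset.mem_product] at hp
        simp only [Finset.mem_sigma, Finset.mem_erase]
        exact ⟨hp.1.1, fun hh => hp.2 hh.symm, hp.1.2⟩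
      · intro x _; rfl
      · intro p _; rfl
      · intro x _; rfl
    rw [hpairs]
    have hsub2 : Sord ⊆ (U ×ˢ U).filter (fun p => p.1 ≠ p.2) := by
      intro p hp
      simp only [hSord, Finset.mem_filter, Finset.mem_univ, true_and] at hp
      simp only [Finset.mem_filter, Finset.mem_product]
      exact ⟨⟨hp.1, hp.2.1⟩, hp.2.2.1⟩
    have hle1 : ∑ p ∈ (U ×ˢ U).filter (fun p => p.1 ≠ p.2), C p.1 p.2
        ≤ ∑ p ∈ Sord, C p.1 p.2 := by
      have := Finset.sum_le_sum_of_subset_of_nonneg (f := fun p : Fin n × Fin n => -(C p.1 p.2))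
        hsub2 (fun p hp _ => by
          show (0:ℤ) ≤ -(C p.1 p.2)
          simp only [Finset.mem_filter, Finset.mem_product] at hp
          rcases hC.offdiag p.1 p.2 hp.2 with h | h <;> omega)
      simp only [Finset.sum_neg_distrib] at this
      omega
    have hle2 : ∑ p ∈ Sord, C p.1 p.2 = -(Sord.card : ℤ) := by
      rw [Finset.sum_congr rfl (fun p hp => by
        simp only [hSord, Finset.mem_filter] at hp
        exact hp.2.2.2.2)]
      simp [Finset.sum_const]
    have hUS : (U.card : ℤ) ≤ S.card := by exact_mod_cast hcard1
    have hSS : (2 * S.card : ℤ) ≤ Sord.card := by exact_mod_cast hcard2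
    omega
  -- contradiction with positive definiteness
  set x : Fin n → ℝ := fun a => if a ∈ U then 1 else 0 with hx
  have hxne : x ≠ 0 := by
    intro hh
    have : x i = 0 := by rw [hh]; rfl
    rw [hx] at this
    simp [hiU] at this
  have hpos := hC.posDef.dotProduct_mulVec_pos hxne
  have hval : dotProduct (star x) ((C.map ((↑) : ℤ → ℝ)) *ᵥ x)
      = ((∑ a ∈ U, ∑ b ∈ U, C a b : ℤ) : ℝ) := by
    rw [star_trivial]
    rw [dotProduct]
    have : ∀ a, x a * ((C.map ((↑) : ℤ → ℝ)) *ᵥ x) a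
        = if a ∈ U then ∑ b, (C.map ((↑) : ℤ → ℝ)) a b * x b else 0 := by
      intro a
      by_cases ha : a ∈ U <;> simp [hx, ha, Matrix.mulVec, dotProduct]
    rw [Finset.sum_congr rfl (fun a _ => this a), Finset.sum_ite_mem, Finset.univ_inter]
    push_cast
    refine Finset.sum_congr rfl fun a _ => ?_
    have : ∀ b, (C.map ((↑) : ℤ → ℝ)) a b * x b = if b ∈ U then ((C a b : ℤ) : ℝ) else 0 := by
      intro b
      by_cases hb : b ∈ U <;> simp [hx, hb, Matrix.map_apply]
    rw [Finset.sum_congr rfl (fun b _ => this b), Finset.sum_ite_mem, Finset.univ_inter]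
  rw [hval] at hpos
  have : (0:ℝ) < ((0:ℤ):ℝ) := lt_of_lt_of_le hpos (by exact_mod_cast hQle)
  simp at this

end Stmt10
namespace Stmt10

variable {n : ℕ} {C : Matrix (Fin n) (Fin n) ℤ} {ar : Fin n → Fin n → Prop}
  {ξ : Fin n → ℤ} {L : List (Fin n)} {h : ℕ}

lemma grec (hC : IsADECartan C) (har : ∀ i j, ar i j → C i j = -1)
    (hξ : ∀ i j, ar i j → ξ i = ξ j + 1) (i k : Fin n) :
    gammaVec ar i k = (if k = i then 1 else 0)
      + ∑ u, if ar k u then gammaVec ar i u else 0 := by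
  by_cases hki : k = i
  · subst hki
    rw [gammaVec_apply, if_pos Relation.ReflTransGen.refl, if_pos rfl]
    have : ∀ u, (if ar k u then gammaVec ar k u else 0) = 0 := by
      intro u
      by_cases hku : ar k u
      · rw [if_pos hku, gammaVec_apply]
        rw [if_neg]
        intro hp
        rcases path_le hξ hp with hh | hh
        · exact not_ar_self hC har k (hh ▸ hku)
        · have := hξ _ _ hku; omega
      · rw [if_neg hku]
    rw [Finset.sum_congr rfl (fun u _ => this u), Finset.sum_const_zero]
    norm_num
  · rw [gammaVec_apply, if_neg hki]
    by_cases hpath : Relation.ReflTransGen ar k i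
    · rw [if_pos hpath]
      obtain ⟨u₀, hu₀, hp₀⟩ := (Relation.ReflTransGen.cases_head hpath).resolve_left hki
      have : ∀ u, (if ar k u then gammaVec ar i u else 0) = if u = u₀ then 1 else 0 := by
        intro u
        by_cases hku : ar k u
        · rw [if_pos hku, gammaVec_apply]
          by_cases hRp : Relation.ReflTransGen ar u i
          · rw [if_pos hRp, if_pos (uop hC har hξ hki hpath ⟨hku, hRp⟩ ⟨hu₀, hp₀⟩)]
          · rw [if_neg hRp, if_neg]
            intro hh; rw [hh] at hRp; exact hRp hp₀
        · rw [if_neg hku, if_neg]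
          intro hh; rw [hh] at hku; exact hku hu₀
      rw [Finset.sum_congr rfl (fun u _ => this u)]
      simp
    · rw [if_neg hpath]
      have : ∀ u, (if ar k u then gammaVec ar i u else 0) = 0 := by
        intro u
        by_cases hku : ar k u
        · rw [if_pos hku, gammaVec_apply, if_neg]
          intro hp
          exact hpath (Relation.ReflTransGen.head hku hp)
        · rw [if_neg hku]
      rw [Finset.sum_congr rfl (fun u _ => this u)]
      simp

section Claims

variable (hC : IsADECartan C) (har : ∀ i j, ar i j → C i j = -1)
  (harx : ∀ i j, i ≠ j → C i j = -1 → Xor' (ar i j) (ar j i))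
  (hξ : ∀ i j, ar i j → ξ i = ξ j + 1)
  (hL1 : ∀ i, i ∈ L) (hL2 : L.Nodup) (hL3 : (L.map ξ).Chain' (· ≥ ·))
  (hn : 0 < n)

include hC har harx hξ hL1 hL2 hL3 hn

lemma down_aux (v : Fin n → ℤ) (c : ℤ) (hv : ∀ k, ξ k ≤ c + 1 → v k = 0) :
    ∀ k, ξ k ≤ c → coxeterOf C L v k = 0 := by
  haveI : Nonempty (Fin n) := ⟨⟨0, hn⟩⟩
  set B : ℤ := Finset.univ.inf' Finset.univ_nonempty ξ with hB
  have hBle : ∀ k : Fin n, B ≤ ξ k := fun k => Finset.inf'_le ξ (Finset.mem_univ k)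
  suffices hsuf : ∀ m : ℕ, ∀ k : Fin n, (ξ k - B).toNat < m → ξ k ≤ c → coxeterOf C L v k = 0 by
    intro k hk
    exact hsuf ((ξ k - B).toNat + 1) k (Nat.lt_succ_self _) hk
  intro m
  induction m with
  | zero => exact fun k hk => absurd hk (Nat.not_lt_zero _)
  | succ m ih =>
      intro k hk hkc
      have hmesh := mesh hC har harx hξ hL1 hL2 hL3 v k
      have hvk : v k = 0 := hv k (by omega)
      have hs2 : (∑ u, if ar u k then v u else 0) = 0 := by
        apply Finset.sum_eq_zero
        intro u _
        by_cases hu : ar u k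
        · rw [if_pos hu]
          exact hv u (by have := hξ u k hu; omega)
        · rw [if_neg hu]
      have hs1 : (∑ u, if ar k u then coxeterOf C L v u else 0) = 0 := by
        apply Finset.sum_eq_zero
        intro u _
        by_cases hu : ar k u
        · rw [if_pos hu]
          have hxu : ξ u = ξ k - 1 := by have := hξ k u hu; omega
          refine ih u ?_ (by omega)
          have := hBle u
          omega
        · rw [if_neg hu]
      rw [hvk, hs1, hs2] at hmesh
      omega

lemma down (i : Fin n) :
    ∀ t : ℕ, ∀ k, ξ k ≤ ξ i - 2*t →
      (coxeterOf C L)^[t] (gammaVec ar i) k = if k = i then 1 else 0 := by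
  intro t
  induction t with
  | zero =>
      intro k hk
      simp only [Function.iterate_zero, id_eq]
      rw [gammaVec_apply]
      by_cases hp : Relation.ReflTransGen ar k i
      · rcases path_le hξ hp with hh | hh
        · rw [if_pos hp, if_pos hh]
        · omega
      · rw [if_neg hp, if_neg]
        intro hh
        exact hp (hh ▸ Relation.ReflTransGen.refl)
  | succ t ih =>
      intro k hk
      have hki : k ≠ i := by
        intro hh; rw [hh] at hk; omega
      rw [if_neg hki, Function.iterate_succ_apply']
      refine down_aux hC har harx hξ hL1 hL2 hL3 hn _ (ξ i - 2*(t+1)) ?_ k (by omega)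
      intro k' hk'
      rw [ih k' (by omega), if_neg]
      intro hh; rw [hh] at hk'; omega

variable (hpos : 0 < h) (hper : (coxeterOf C L)^[h] = id)
include hpos hper

lemma mesh_inv (w : Fin n → ℤ) (k : Fin n) :
    w k + (coxeterOf C L)^[h-1] w k
      = (∑ u, if ar k u then w u else 0)
        + (∑ u, if ar u k then (coxeterOf C L)^[h-1] w u else 0) := by
  have key : coxeterOf C L ((coxeterOf C L)^[h-1] w) = w := by
    have e := Function.iterate_succ_apply' (coxeterOf C L) (h-1) w
    rw [show (h-1).succ = h by omega, hper] at e
    exact e.symm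
  have := mesh hC har harx hξ hL1 hL2 hL3 ((coxeterOf C L)^[h-1] w) k
  rw [key] at this
  exact this

lemma up_aux (w : Fin n → ℤ) (c : ℤ)
    (hw : ∀ k, c ≤ ξ k → w k = (∑ u, if ar k u then w u else 0)) :
    ∀ k, c ≤ ξ k → (coxeterOf C L)^[h-1] w k = 0 := by
  haveI : Nonempty (Fin n) := ⟨⟨0, hn⟩⟩
  set B : ℤ := Finset.univ.sup' Finset.univ_nonempty ξ with hB
  have hBle : ∀ k : Fin n, ξ k ≤ B := fun k => Finset.le_sup' ξ (Finset.mem_univ k)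
  suffices hsuf : ∀ m : ℕ, ∀ k : Fin n, (B - ξ k).toNat < m → c ≤ ξ k →
      (coxeterOf C L)^[h-1] w k = 0 by
    intro k hk
    exact hsuf ((B - ξ k).toNat + 1) k (Nat.lt_succ_self _) hk
  intro m
  induction m with
  | zero => exact fun k hk => absurd hk (Nat.not_lt_zero _)
  | succ m ih =>
      intro k hk hkc
      have hmesh := mesh_inv hC har harx hξ hL1 hL2 hL3 hn hpos hper w k
      have hs2 : (∑ u, if ar u k then (coxeterOf C L)^[h-1] w u else 0) = 0 := by
        apply Finset.sum_eq_zero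
        intro u _
        by_cases hu : ar u k
        · rw [if_pos hu]
          have hxu : ξ u = ξ k + 1 := by have := hξ u k hu; omega
          refine ih u ?_ (by omega)
          have := hBle u
          omega
        · rw [if_neg hu]
      rw [hs2, hw k hkc] at hmesh
      omega

lemma up (i : Fin n) :
    ∀ t : ℕ, ∀ k, ξ i + 2*(t+1) - 1 ≤ ξ k →
      ((coxeterOf C L)^[h-1])^[t+1] (gammaVec ar i) k = 0 := by
  intro t
  induction t with
  | zero =>
      intro k hk
      simp only [zero_add, Function.iterate_one]
      refine up_aux hC har harx hξ hL1 hL2 hL3 hn hpos hper _ (ξ i + 1) ?_ k (by omega)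
      intro k' hk'
      have hki : k' ≠ i := by intro hh; rw [hh] at hk'; omega
      have := grec hC har hξ i k'
      rw [if_neg hki] at this
      omega
  | succ t ih =>
      intro k hk
      rw [Function.iterate_succ_apply']
      refine up_aux hC har harx hξ hL1 hL2 hL3 hn hpos hper _ (ξ i + 2*(t+2) - 1) ?_ k
        (by omega)
      intro k' hk'
      rw [ih k' (by omega)]
      symm
      apply Finset.sum_eq_zero
      intro u _
      by_cases hu : ar k' u
      · rw [if_pos hu]
        exact ih u (by have := hξ k' u hu; omega)
      · rw [if_neg hu]

end Claims

end Stmt10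
namespace Stmt10

/-- dimension vector of `H_Q(i,q)` computed from the Coxeter transformation. -/
noncomputable def dvvFun {n : ℕ} (τ σ : (Fin n → ℤ) → Fin n → ℤ) (γ : Fin n → ℤ)
    (ξi : ℤ) (q : ℤ) : Fin n → ℤ :=
  if (ξi - q) % 2 = 0 then
    (if q ≤ ξi then τ^[((ξi - q)/2).toNat] γ else σ^[((q - ξi)/2).toNat] γ)
  else 0

variable {n : ℕ} {C : Matrix (Fin n) (Fin n) ℤ} {ar : Fin n → Fin n → Prop}
  {ξ : Fin n → ℤ} {L : List (Fin n)} {h : ℕ}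

lemma coxeterOf_zero (C : Matrix (Fin n) (Fin n) ℤ) (l : List (Fin n)) :
    coxeterOf C l (fun _ => (0:ℤ)) = fun _ => (0:ℤ) := by
  induction l with
  | nil => rfl
  | cons a l ih =>
      rw [coxeterOf_cons]
      simp only [Function.comp_apply, ih]
      funext k
      simp [simpleRefl]

section DvvClaims

variable (hC : IsADECartan C) (har : ∀ i j, ar i j → C i j = -1)
  (harx : ∀ i j, i ≠ j → C i j = -1 → Xor' (ar i j) (ar j i))
  (hξ : ∀ i j, ar i j → ξ i = ξ j + 1)
  (hL1 : ∀ i, i ∈ L) (hL2 : L.Nodup) (hL3 : (L.map ξ).Chain' (· ≥ ·))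
  (hn : 0 < n) (hpos : 0 < h) (hper : (coxeterOf C L)^[h] = id)

include hpos hper in
lemma tau_sigma : ∀ x : Fin n → ℤ, coxeterOf C L ((coxeterOf C L)^[h-1] x) = x := by
  intro x
  have e := Function.iterate_succ_apply' (coxeterOf C L) (h-1) x
  rw [show (h-1).succ = h by omega, hper] at e
  exact e.symm

include hpos hper in
lemma tau_dvv (i : Fin n) (q : ℤ) :
    coxeterOf C L
      (dvvFun (coxeterOf C L) ((coxeterOf C L)^[h-1]) (gammaVec ar i) (ξ i) q)
      = dvvFun (coxeterOf C L) ((coxeterOf C L)^[h-1]) (gammaVec ar i) (ξ i) (q - 2) := by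
  set τ := coxeterOf C L
  set σ := (coxeterOf C L)^[h-1]
  set γ := gammaVec ar i
  by_cases hpar : (ξ i - q) % 2 = 0
  · have hpar' : (ξ i - (q-2)) % 2 = 0 := by omega
    by_cases hle : q ≤ ξ i
    · have hle' : q - 2 ≤ ξ i := by omega
      have harith : ((ξ i - (q-2))/2).toNat = ((ξ i - q)/2).toNat + 1 := by omega
      rw [dvvFun, dvvFun, if_pos hpar, if_pos hpar', if_pos hle, if_pos hle', harith,
        Function.iterate_succ_apply']
    · by_cases h2 : q = ξ i + 2
      · have e1 : ((q - ξ i)/2).toNat = 1 := by omega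
        have e2 : q - 2 ≤ ξ i := by omega
        have e3 : ((ξ i - (q-2))/2).toNat = 0 := by omega
        rw [dvvFun, dvvFun, if_pos hpar, if_pos hpar', if_neg hle, if_pos e2, e1, e3,
          Function.iterate_one, Function.iterate_zero, id_eq]
        exact tau_sigma hpos hper γ
      · have hge : ξ i + 4 ≤ q := by omega
        have e2 : ¬ (q - 2 ≤ ξ i) := by omega
        set b : ℕ := ((q - ξ i)/2).toNat with hb
        have hb1 : 1 ≤ b := by omega
        have e3 : ((q - 2 - ξ i)/2).toNat = b - 1 := by omega
        rw [dvvFun, dvvFun, if_pos hpar, if_pos hpar', if_neg hle, if_neg e2, e3]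
        have e4 : σ^[b] γ = σ (σ^[b-1] γ) := by
          have e := Function.iterate_succ_apply' σ (b-1) γ
          rw [show (b-1).succ = b by omega] at e
          exact e
        rw [e4]
        exact tau_sigma hpos hper (σ^[b-1] γ)
  · have hpar' : ¬ (ξ i - (q-2)) % 2 = 0 := by omega
    rw [dvvFun, dvvFun, if_neg hpar, if_neg hpar']
    exact coxeterOf_zero C L

include hC har harx hξ hL1 hL2 hL3 hn hpos hper in
lemma dvv_self (i k : Fin n) :
    dvvFun (coxeterOf C L) ((coxeterOf C L)^[h-1]) (gammaVec ar i) (ξ i) (ξ k) k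
      = if k = i then 1 else 0 := by
  by_cases hpar : (ξ i - ξ k) % 2 = 0
  · rw [dvvFun, if_pos hpar]
    by_cases hle : ξ k ≤ ξ i
    · rw [if_pos hle]
      exact down hC har harx hξ hL1 hL2 hL3 hn i ((ξ i - ξ k)/2).toNat k (by omega)
    · rw [if_neg hle]
      set t : ℕ := ((ξ k - ξ i)/2).toNat with ht
      have ht1 : 1 ≤ t := by omega
      have hki : k ≠ i := by intro hh; rw [hh] at hle; omega
      rw [if_neg hki, show t = (t-1)+1 by omega]
      exact up hC har harx hξ hL1 hL2 hL3 hn hpos hper i (t-1) k (by omega)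
  · rw [dvvFun, if_neg hpar]
    have hki : k ≠ i := by intro hh; rw [hh] at hpar; omega
    rw [if_neg hki]
    rfl

include hC har harx hξ hL1 hL2 hL3 hn hpos hper in
lemma dvv_above (i k : Fin n) :
    dvvFun (coxeterOf C L) ((coxeterOf C L)^[h-1]) (gammaVec ar i) (ξ i) (ξ k + 1) k = 0 := by
  by_cases hpar : (ξ i - (ξ k + 1)) % 2 = 0
  · rw [dvvFun, if_pos hpar]
    by_cases hle : ξ k + 1 ≤ ξ i
    · rw [if_pos hle]
      have := down hC har harx hξ hL1 hL2 hL3 hn i ((ξ i - (ξ k + 1))/2).toNat k (by omega)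
      rw [this, if_neg]
      intro hh; rw [hh] at hpar; omega
    · rw [if_neg hle]
      set t : ℕ := ((ξ k + 1 - ξ i)/2).toNat with ht
      have ht1 : 1 ≤ t := by omega
      rw [show t = (t-1)+1 by omega]
      exact up hC har harx hξ hL1 hL2 hL3 hn hpos hper i (t-1) k (by omega)
  · rw [dvvFun, if_neg hpar]
    rfl

include hC har harx hξ hL1 hL2 hL3 hn hpos hper in
lemma mesh_dvv (i : Fin n) (q : ℤ) (k : Fin n) :
    dvvFun (coxeterOf C L) ((coxeterOf C L)^[h-1]) (gammaVec ar i) (ξ i) (q - 2) k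
      + dvvFun (coxeterOf C L) ((coxeterOf C L)^[h-1]) (gammaVec ar i) (ξ i) q k
    = (∑ u, if ar k u then
        dvvFun (coxeterOf C L) ((coxeterOf C L)^[h-1]) (gammaVec ar i) (ξ i) (q - 2) u else 0)
      + (∑ u, if ar u k then
        dvvFun (coxeterOf C L) ((coxeterOf C L)^[h-1]) (gammaVec ar i) (ξ i) q u else 0) := by
  have hmesh := mesh hC har harx hξ hL1 hL2 hL3
    (dvvFun (coxeterOf C L) ((coxeterOf C L)^[h-1]) (gammaVec ar i) (ξ i) q) k
  rw [tau_dvv hpos hper i q] at hmesh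
  exact hmesh

end DvvClaims

end Stmt10
namespace Stmt10

variable {n : ℕ} {C : Matrix (Fin n) (Fin n) ℤ} {ar : Fin n → Fin n → Prop}
  {ξ : Fin n → ℤ} {L : List (Fin n)} {h : ℕ}

section Core

variable (hC : IsADECartan C) (har : ∀ i j, ar i j → C i j = -1)
  (harx : ∀ i j, i ≠ j → C i j = -1 → Xor' (ar i j) (ar j i))
  (hξ : ∀ i j, ar i j → ξ i = ξ j + 1)
  (hL1 : ∀ i, i ∈ L) (hL2 : L.Nodup) (hL3 : (L.map ξ).Chain' (· ≥ ·))
  (hn : 0 < n) (hpos : 0 < h) (hper : (coxeterOf C L)^[h] = id)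

include hC har harx in
lemma sum_erase_adj (k : Fin n) (X : Fin n → ℤ) :
    ∑ j ∈ Finset.univ.erase k, C k j * X j
      = -((∑ j, if ar k j then X j else 0) + (∑ j, if ar j k then X j else 0)) := by
  have step : ∀ j ∈ Finset.univ.erase k, C k j * X j
      = -(((if ar j k then (1:ℤ) else 0)) + (if ar k j then (1:ℤ) else 0)) * X j := by
    intro j hj
    rw [adj_decomp hC har harx (Ne.symm (Finset.ne_of_mem_erase hj))]
  rw [Finset.sum_congr rfl step]
  have e1 : ∑ j ∈ Finset.univ.erase k,
      (-(((if ar j k then (1:ℤ) else 0)) + (if ar k j then (1:ℤ) else 0)) * X j)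
      = -((∑ j ∈ Finset.univ.erase k, if ar k j then X j else 0)
          + (∑ j ∈ Finset.univ.erase k, if ar j k then X j else 0)) := by
    rw [← Finset.sum_add_distrib, ← Finset.sum_neg_distrib]
    refine Finset.sum_congr rfl fun j _ => ?_
    by_cases h1 : ar k j <;> by_cases h2 : ar j k <;> simp [h1, h2] <;> ring
  rw [e1]
  have e2 : ∑ j ∈ Finset.univ.erase k, (if ar k j then X j else 0)
      = ∑ j, if ar k j then X j else 0 :=
    Finset.sum_erase _ (by simp [not_ar_self hC har k])
  have e3 : ∑ j ∈ Finset.univ.erase k, (if ar j k then X j else 0)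
      = ∑ j, if ar j k then X j else 0 :=
    Finset.sum_erase _ (by simp [not_ar_self hC har k])
  rw [e2, e3]

include hC har harx hξ hL1 hL2 hL3 hn hpos hper in
/-- the core coefficient identity -/
lemma core (i k : Fin n) (t : ℤ) :
    (if 2 ≤ t then
        dvvFun (coxeterOf C L) ((coxeterOf C L)^[h-1]) (gammaVec ar i) (ξ i) (ξ k - (t-2)) k
      else 0)
    + (if 0 ≤ t then
        dvvFun (coxeterOf C L) ((coxeterOf C L)^[h-1]) (gammaVec ar i) (ξ i) (ξ k - t) k
      else 0)
    + ∑ j ∈ Finset.univ.erase k, C k j * (if 1 ≤ t then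
        dvvFun (coxeterOf C L) ((coxeterOf C L)^[h-1]) (gammaVec ar i) (ξ i) (ξ j - (t-1)) j
      else 0)
    = if t = 0 then (if k = i then 1 else 0) else 0 := by
  set τ := coxeterOf C L with hτ
  set σ := (coxeterOf C L)^[h-1] with hσ
  set γ := gammaVec ar i with hγ
  rcases lt_trichotomy t 0 with htneg | ht0 | htpos
  · rw [if_neg (show ¬ (2:ℤ) ≤ t by omega), if_neg (show ¬ (0:ℤ) ≤ t by omega),
      if_neg (show ¬ t = 0 by omega)]
    rw [Finset.sum_congr rfl (fun j _ => by
      rw [if_neg (show ¬ (1:ℤ) ≤ t by omega), mul_zero])]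
    simp
  · subst ht0
    rw [if_neg (by omega), if_pos le_rfl, if_pos rfl]
    rw [Finset.sum_congr rfl (fun j _ => by
      rw [if_neg (show ¬ (1:ℤ) ≤ (0:ℤ) by omega), mul_zero])]
    rw [Finset.sum_const_zero]
    have := dvv_self hC har harx hξ hL1 hL2 hL3 hn hpos hper i k
    rw [show ξ k - (0:ℤ) = ξ k by ring]
    rw [← hτ, ← hσ, ← hγ] at this
    omega
  · rw [Finset.sum_congr rfl (fun j _ => by rw [if_pos (show (1:ℤ) ≤ t by omega)])]
    rw [sum_erase_adj hC har harx k (fun j => dvvFun τ σ γ (ξ i) (ξ j - (t-1)) j)]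
    have elow : (∑ j, if ar k j then dvvFun τ σ γ (ξ i) (ξ j - (t-1)) j else 0)
        = ∑ j, if ar k j then dvvFun τ σ γ (ξ i) (ξ k - t) j else 0 := by
      refine Finset.sum_congr rfl fun j _ => ?_
      by_cases hj : ar k j
      · rw [if_pos hj, if_pos hj]
        have : ξ j = ξ k - 1 := by have := hξ k j hj; omega
        rw [this, show ξ k - 1 - (t-1) = ξ k - t by ring]
      · rw [if_neg hj, if_neg hj]
    have ehigh : (∑ j, if ar j k then dvvFun τ σ γ (ξ i) (ξ j - (t-1)) j else 0)
        = ∑ j, if ar j k then dvvFun τ σ γ (ξ i) (ξ k - t + 2) j else 0 := by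
      refine Finset.sum_congr rfl fun j _ => ?_
      by_cases hj : ar j k
      · rw [if_pos hj, if_pos hj]
        have : ξ j = ξ k + 1 := by have := hξ j k hj; omega
        rw [this, show ξ k + 1 - (t-1) = ξ k - t + 2 by ring]
      · rw [if_neg hj, if_neg hj]
    rw [elow, ehigh]
    have hmesh := mesh_dvv hC har harx hξ hL1 hL2 hL3 hn hpos hper i (ξ k - t + 2) k
    rw [show ξ k - t + 2 - 2 = ξ k - t by ring] at hmesh
    rw [← hτ, ← hσ, ← hγ] at hmesh
    rcases eq_or_lt_of_le (show (1:ℤ) ≤ t by omega) with ht1 | ht2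
    · rw [if_neg (by omega), if_pos (by omega), if_neg (by omega)]
      have habove := dvv_above hC har harx hξ hL1 hL2 hL3 hn hpos hper i k
      rw [← hτ, ← hσ, ← hγ] at habove
      have e1 : ξ k - t + 2 = ξ k + 1 := by omega
      rw [e1] at hmesh
      rw [show ξ k - t = ξ k - 1 by omega] at *
      rw [show ξ k - 1 + 2 = ξ k + 1 by ring]
      omega
    · rw [if_pos (by omega), if_pos (by omega), if_neg (by omega)]
      rw [show ξ k - (t-2) = ξ k - t + 2 by ring]
      omega

end Core

end Stmt10
namespace Stmt10

/-- the generating series of Euler characteristics -/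
noncomputable def phiF {n : ℕ} (ar : Fin n → Fin n → Prop) (ξ : Fin n → ℤ)
    (τ σ : (Fin n → ℤ) → Fin n → ℤ) (i j : Fin n) : LaurentSeries ℚ :=
  HahnSeries.single (1:ℤ) (1:ℚ) * HahnSeries.ofPowerSeries ℤ ℚ
    (PowerSeries.mk fun m => ((dvvFun τ σ (gammaVec ar i) (ξ i) (ξ j - m) j : ℤ) : ℚ))

lemma ofPS_coeff_neg (x : PowerSeries ℚ) {t : ℤ} (ht : t < 0) :
    (HahnSeries.ofPowerSeries ℤ ℚ x).coeff t = 0 := by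
  rw [HahnSeries.ofPowerSeries_apply]
  apply HahnSeries.embDomain_notin_range
  rintro ⟨m, hm⟩
  simp only [Nat.castOrderEmbedding_apply] at hm
  omega

lemma single_one_mul_coeff (x : LaurentSeries ℚ) (t : ℤ) :
    (HahnSeries.single (1:ℤ) (1:ℚ) * x).coeff t = x.coeff (t-1) := by
  have := HahnSeries.coeff_single_mul_add (r := (1:ℚ)) (x := x) (a := t-1) (b := 1)
  rw [show t-1+1 = t by ring, one_mul] at this
  exact this

lemma single_negone_mul_coeff (x : LaurentSeries ℚ) (t : ℤ) :
    (HahnSeries.single (-1:ℤ) (1:ℚ) * x).coeff t = x.coeff (t+1) := by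
  have := HahnSeries.coeff_single_mul_add (r := (1:ℚ)) (x := x) (a := t+1) (b := -1)
  rw [show t+1+(-1) = t by ring, one_mul] at this
  exact this

lemma intCast_mul_coeff (c : ℤ) (x : LaurentSeries ℚ) (t : ℤ) :
    (((c : ℤ) : LaurentSeries ℚ) * x).coeff t = (c : ℚ) * x.coeff t := by
  have e : ((c : ℤ) : LaurentSeries ℚ) = HahnSeries.C ((c : ℤ) : ℚ) :=
    (map_intCast (HahnSeries.C : ℚ →+* HahnSeries ℤ ℚ) c).symm
  rw [e, HahnSeries.C_apply, HahnSeries.coeff_single_zero_mul]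

lemma sum_coeff {α : Type*} (s : Finset α) (f : α → LaurentSeries ℚ) (t : ℤ) :
    (∑ j ∈ s, f j).coeff t = ∑ j ∈ s, (f j).coeff t :=
  map_sum (HahnSeries.coeff.addMonoidHom t) f s

variable {n : ℕ}

lemma phiF_coeff (ar : Fin n → Fin n → Prop) (ξ : Fin n → ℤ)
    (τ σ : (Fin n → ℤ) → Fin n → ℤ) (i j : Fin n) (t : ℤ) :
    (phiF ar ξ τ σ i j).coeff t
      = if 1 ≤ t then ((dvvFun τ σ (gammaVec ar i) (ξ i) (ξ j - (t-1)) j : ℤ) : ℚ) else 0 := by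
  rw [phiF, single_one_mul_coeff]
  by_cases ht : 1 ≤ t
  · rw [if_pos ht]
    have e : t - 1 = (((t-1).toNat : ℕ) : ℤ) := by omega
    rw [e, HahnSeries.ofPowerSeries_apply_coeff, PowerSeries.coeff_mk]
  · rw [if_neg ht]
    exact ofPS_coeff_neg _ (by omega)

lemma qCartan_diag (C : Matrix (Fin n) (Fin n) ℤ) (k : Fin n) :
    qCartan C k k = HahnSeries.single (1:ℤ) (1:ℚ) + HahnSeries.single (-1:ℤ) (1:ℚ) := by
  simp [qCartan]

lemma qCartan_off (C : Matrix (Fin n) (Fin n) ℤ) {k j : Fin n} (hkj : k ≠ j) :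
    qCartan C k j = ((C k j : ℤ) : LaurentSeries ℚ) := by
  simp [qCartan, hkj]

section QMul

variable {C : Matrix (Fin n) (Fin n) ℤ} {ar : Fin n → Fin n → Prop}
  {ξ : Fin n → ℤ} {L : List (Fin n)} {h : ℕ}
  (hC : IsADECartan C) (har : ∀ i j, ar i j → C i j = -1)
  (harx : ∀ i j, i ≠ j → C i j = -1 → Xor' (ar i j) (ar j i))
  (hξ : ∀ i j, ar i j → ξ i = ξ j + 1)
  (hL1 : ∀ i, i ∈ L) (hL2 : L.Nodup) (hL3 : (L.map ξ).Chain' (· ≥ ·))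
  (hn : 0 < n) (hpos : 0 < h) (hper : (coxeterOf C L)^[h] = id)

include hC har harx hξ hL1 hL2 hL3 hn hpos hper in
lemma qmul :
    qCartan C * (Matrix.of fun j i =>
      phiF ar ξ (coxeterOf C L) ((coxeterOf C L)^[h-1]) i j) = 1 := by
  set τ := coxeterOf C L with hτ
  set σ := (coxeterOf C L)^[h-1] with hσ
  apply Matrix.ext
  intro k i'
  rw [Matrix.mul_apply, Matrix.one_apply]
  apply HahnSeries.ext
  funext t
  rw [sum_coeff]
  rw [← Finset.add_sum_erase _ _ (Finset.mem_univ k)]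
  have hdiag : (qCartan C k k * Matrix.of (fun j i =>
      phiF ar ξ τ σ i j) k i').coeff t
      = (((if 2 ≤ t then
          dvvFun τ σ (gammaVec ar i') (ξ i') (ξ k - (t-2)) k else 0) : ℤ) : ℚ)
        + (((if 0 ≤ t then
          dvvFun τ σ (gammaVec ar i') (ξ i') (ξ k - t) k else 0) : ℤ) : ℚ) := by
    rw [qCartan_diag, add_mul, HahnSeries.coeff_add, single_one_mul_coeff,
      single_negone_mul_coeff]
    show (phiF ar ξ τ σ i' k).coeff (t-1) + (phiF ar ξ τ σ i' k).coeff (t+1) = _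
    rw [phiF_coeff, phiF_coeff]
    congr 1
    · rw [show t-1-1 = t-2 by ring]
      by_cases h2 : 2 ≤ t
      · rw [if_pos (show (1:ℤ) ≤ t-1 by omega), if_pos h2]
      · rw [if_neg (show ¬ (1:ℤ) ≤ t-1 by omega), if_neg h2]
        simp
    · rw [show t+1-1 = t by ring]
      by_cases h2 : 0 ≤ t
      · rw [if_pos (show (1:ℤ) ≤ t+1 by omega), if_pos h2]
      · rw [if_neg (show ¬ (1:ℤ) ≤ t+1 by omega), if_neg h2]
        simp
  have hoff : ∀ j ∈ Finset.univ.erase k,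
      (qCartan C k j * Matrix.of (fun j i => phiF ar ξ τ σ i j) j i').coeff t
      = ((C k j * (if 1 ≤ t then
          dvvFun τ σ (gammaVec ar i') (ξ i') (ξ j - (t-1)) j else 0) : ℤ) : ℚ) := by
    intro j hj
    have hkj : k ≠ j := (Finset.ne_of_mem_erase hj).symm
    rw [qCartan_off C hkj]
    show (((C k j : ℤ) : LaurentSeries ℚ) * phiF ar ξ τ σ i' j).coeff t = _
    rw [intCast_mul_coeff, phiF_coeff]
    push_cast
    split_ifs <;> simp
  rw [hdiag, Finset.sum_congr rfl hoff]
  rw [← Int.cast_sum, ← Int.cast_add, ← Int.cast_add]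
  rw [core hC har harx hξ hL1 hL2 hL3 hn hpos hper i' k t]
  by_cases hki : k = i' <;> by_cases ht0 : t = 0 <;>
    simp [hki, ht0, HahnSeries.coeff_one]

include hC in
lemma qCartan_symm : (qCartan C)ᵀ = qCartan C := by
  apply Matrix.ext
  intro a b
  rw [Matrix.transpose_apply]
  by_cases hab : a = b
  · rw [hab]
  · rw [qCartan_off C (Ne.symm hab), qCartan_off C hab, hC.symm]

include hC har harx hξ hL1 hL2 hL3 hn hpos hper in
lemma qCartan_inv_coeff (i j : Fin n) (m : ℤ) (hm : 0 ≤ m) :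
    ((qCartan C)⁻¹ i j).coeff (m+1)
      = ((dvvFun (coxeterOf C L) ((coxeterOf C L)^[h-1]) (gammaVec ar i) (ξ i)
          (ξ j - m) j : ℤ) : ℚ) := by
  have hinv : (qCartan C)⁻¹ = Matrix.of (fun j i =>
      phiF ar ξ (coxeterOf C L) ((coxeterOf C L)^[h-1]) i j) :=
    Matrix.inv_eq_right_inv (qmul hC har harx hξ hL1 hL2 hL3 hn hpos hper)
  have hsym : (qCartan C)⁻¹ i j = (qCartan C)⁻¹ j i := by
    have h1 : ((qCartan C)⁻¹)ᵀ = ((qCartan C)ᵀ)⁻¹ := Matrix.transpose_nonsing_inv _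
    rw [qCartan_symm hC] at h1
    calc (qCartan C)⁻¹ i j = ((qCartan C)⁻¹)ᵀ j i := rfl
      _ = (qCartan C)⁻¹ j i := by rw [h1]
  rw [hsym, hinv]
  show (phiF ar ξ (coxeterOf C L) ((coxeterOf C L)^[h-1]) i j).coeff (m+1) = _
  rw [phiF_coeff, if_pos (by omega), show m+1-1 = m by ring]

end QMul

end Stmt10
open Stmt10 in
/-- For vertices `(i,p), (j,r)` of the repetition quiver with `r ≥ p`,
the Euler characteristic `⟨H_Q(i,p), H_Q(j,r)⟩ = Σ_k (-1)^k dim Ext^k_{D_Q}` equals the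
inverse quantum Cartan matrix coefficient `c̃_{ij}(r - p + 1)`. -/
theorem statement10 {n : ℕ} (hn : 0 < n) (C : Matrix (Fin n) (Fin n) ℤ)
    (hC : IsADECartan C) (ct : Fin n → Fin n → ℤ → ℤ)
    (hct : ∀ i j ℓ, ((qCartan C)⁻¹ i j).coeff ℓ = (ct i j ℓ : ℚ))
    (ε : Fin n → ℤ) (hε01 : ∀ i, ε i = 0 ∨ ε i = 1)
    (hεadj : ∀ i j, C i j = -1 → ε i ≠ ε j)
    (ar : Fin n → Fin n → Prop)
    (har : ∀ i j, ar i j → C i j = -1)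
    (harx : ∀ i j, i ≠ j → C i j = -1 → Xor' (ar i j) (ar j i))
    (ξ : Fin n → ℤ) (hξ : ∀ i j, ar i j → ξ i = ξ j + 1)
    (hξε : ∀ i, (ξ i - ε i) % 2 = 0)
    (L : List (Fin n)) (hL1 : ∀ i, i ∈ L) (hL2 : L.Nodup)
    (hL3 : (L.map ξ).Chain' (· ≥ ·))
    (h : ℕ) (hpos : 0 < h) (hper : (coxeterOf C L)^[h] = id)
    (hmin : ∀ k : ℕ, 0 < k → k < h → (coxeterOf C L)^[k] ≠ id)
    (star : Fin n → Fin n)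
    (hstar : ∃ L' : List (Fin n), ∀ i : Fin n,
      coxeterOf C L' (Pi.single i 1) = - Pi.single (star i) 1)
    (E : HappelExtData n ar ξ star h (coxeterOf C L)) :
    ∀ (i j : Fin n) (p r : ℤ), (p - ε i) % 2 = 0 → (r - ε j) % 2 = 0 → p ≤ r →
      eulerSum (E.ext (i, p) (j, r)) = ct i j (r - p + 1) := by
  intro i j p r hpar hrar hpr
  -- parity facts
  have hpi : (ξ i - p) % 2 = 0 := by have := hξε i; have := hε01 i; omega
  have hrj : (ξ j - r) % 2 = 0 := by have := hξε j; have := hε01 j; omega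
  -- σ ∘ τ = id
  have hst : ∀ x : Fin n → ℤ,
      (coxeterOf C L)^[h-1] (coxeterOf C L x) = x := by
    intro x
    have e := Function.iterate_succ_apply (coxeterOf C L) (h-1) x
    rw [show (h-1).succ = h from by omega, hper] at e
    exact e.symm
  -- simultaneous translation invariance of the Euler form
  have shiftN : ∀ (t : ℕ) (p' r' : ℤ),
      eulerSum (E.ext (i, p' - 2*(t:ℤ)) (j, r' - 2*(t:ℤ)))
        = eulerSum (E.ext (i, p') (j, r')) := by
    intro t
    induction t with
    | zero => intro p' r'; norm_num
    | succ t ih =>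
        intro p' r'
        have h1 := E.heuler_tau (i, p' - 2*(t:ℤ)) (j, r' - 2*(t:ℤ))
        simp only at h1
        rw [show p' - 2*(((t:ℕ)+1:ℕ):ℤ) = p' - 2*(t:ℤ) - 2 by push_cast; ring,
          show r' - 2*(((t:ℕ)+1:ℕ):ℤ) = r' - 2*(t:ℤ) - 2 by push_cast; ring]
        exact h1.trans (ih p' r')
  have shiftZ : ∀ d : ℤ,
      eulerSum (E.ext (i, p + 2*d) (j, r + 2*d)) = eulerSum (E.ext (i, p) (j, r)) := by
    intro d
    rcases le_or_gt 0 d with hd | hd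
    · have := shiftN d.toNat (p + 2*d) (r + 2*d)
      rw [show p + 2*d - 2*((d.toNat:ℕ):ℤ) = p by omega,
        show r + 2*d - 2*((d.toNat:ℕ):ℤ) = r by omega] at this
      exact this.symm
    · have := shiftN (-d).toNat p r
      rw [show p - 2*(((-d).toNat:ℕ):ℤ) = p + 2*d by omega,
        show r - 2*(((-d).toNat:ℕ):ℤ) = r + 2*d by omega] at this
      exact this
  -- step A : translate so that the target is on the injective slice
  have h1 : eulerSum (E.ext (i, p) (j, r)) = E.dv (i, p + (ξ j - r)) j := by
    have hd := shiftZ ((ξ j - r)/2)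
    rw [show 2*((ξ j - r)/2) = ξ j - r by omega] at hd
    rw [← hd, show r + (ξ j - r) = ξ j by ring]
    exact E.heuler_inj (i, p + (ξ j - r)) j
  -- step B : dimension vectors via the Coxeter element
  have dvdown : ∀ t : ℕ,
      E.dv (i, ξ i - 2*(t:ℤ)) = (coxeterOf C L)^[t] (gammaVec ar i) := by
    intro t
    induction t with
    | zero => simpa using E.hdv_inj i
    | succ t ih =>
        have h2 := E.hdv_tau (i, ξ i - 2*(t:ℤ))
        simp only at h2
        rw [show ξ i - 2*(((t:ℕ)+1:ℕ):ℤ) = ξ i - 2*(t:ℤ) - 2 by push_cast; ring, h2, ih,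
          Function.iterate_succ_apply']
  have dvup : ∀ t : ℕ,
      E.dv (i, ξ i + 2*(t:ℤ)) = ((coxeterOf C L)^[h-1])^[t] (gammaVec ar i) := by
    intro t
    induction t with
    | zero => simpa using E.hdv_inj i
    | succ t ih =>
        rw [show ξ i + 2*(((t:ℕ)+1:ℕ):ℤ) = ξ i + 2*(t:ℤ) + 2 by push_cast; ring]
        have h2 := E.hdv_tau (i, ξ i + 2*(t:ℤ) + 2)
        simp only at h2
        rw [show ξ i + 2*(t:ℤ) + 2 - 2 = ξ i + 2*(t:ℤ) by ring] at h2
        have h3 := congrArg ((coxeterOf C L)^[h-1]) h2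
        rw [hst] at h3
        rw [← h3, ih]
        exact (Function.iterate_succ_apply' _ t _).symm
  have hdveq : ∀ q : ℤ, (ξ i - q) % 2 = 0 →
      E.dv (i, q) = dvvFun (coxeterOf C L) ((coxeterOf C L)^[h-1]) (gammaVec ar i)
        (ξ i) q := by
    intro q hq
    by_cases hle : q ≤ ξ i
    · have := dvdown ((ξ i - q)/2).toNat
      rw [show ξ i - 2*((((ξ i - q)/2).toNat:ℕ):ℤ) = q by omega] at this
      rw [this, dvvFun, if_pos hq, if_pos hle]
    · have := dvup ((q - ξ i)/2).toNat
      rw [show ξ i + 2*((((q - ξ i)/2).toNat:ℕ):ℤ) = q by omega] at this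
      rw [this, dvvFun, if_pos hq, if_neg hle]
  have h2 : E.dv (i, p + (ξ j - r)) j
      = dvvFun (coxeterOf C L) ((coxeterOf C L)^[h-1]) (gammaVec ar i) (ξ i)
          (ξ j - (r - p)) j := by
    rw [show p + (ξ j - r) = ξ j - (r - p) by ring]
    exact congrFun (hdveq _ (by omega)) j
  -- step C : the inverse quantum Cartan matrix coefficient
  have h3 := Stmt10.qCartan_inv_coeff hC har harx hξ hL1 hL2 hL3 hn hpos hper i j (r - p)
    (by omega)
  have h4 := hct i j (r - p + 1)
  rw [show r - p + 1 = (r - p) + 1 by ring] at h4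
  rw [h4] at h3
  have h5 : ct i j (r - p + 1) = dvvFun (coxeterOf C L) ((coxeterOf C L)^[h-1])
      (gammaVec ar i) (ξ i) (ξ j - (r - p)) j := by
    exact_mod_cast h3
  rw [h1, h2, ← h5]
end

section
/- In the derived category of a Dynkin quiver of type A_{N−1} with monotone orientation, the dimension of Ext¹ between consecutive objects in the sequence defined by x(j) (which alternates simple modules S_i shifted by even degrees and the maximal indecomposable M_θ shifted by odd degrees) is 1 between consecutive terms and 0 otherwise; equivalently, the resulting quiver Γ_J is the A_∞ quiver with monotone orientation. Concretely: for the linear A_{N−1} quiver 1 → 2 → ··· → N−1, setting X(j) = S_i[−2k] if j = i + kN with 1 ≤ i < N, and X(j) = M_θ[−2k+1] if j = kN (where θ = α₁ + ··· + α_{N−1}), one has dim Ext¹(X(j), X(j')) = 1 if j' = j + 1 and 0 otherwise. -/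
/-- The `k`-th space of the "interval" representation `M_{α(j;ℓ)}` of the `A_∞` quiver
(vertices `ℤ`, arrows `k → k+1`): a copy of `ℂ` (as a submodule of `ℂ`) at the vertices
`j, j+1, …, j+ℓ-1` and `0` elsewhere. -/
noncomputable def intervalSub (j : ℤ) (ℓ : ℕ) (k : ℤ) : Submodule ℂ ℂ :=
  if j ≤ k ∧ k < j + (ℓ : ℤ) then ⊤ else ⊥

/-- The structure map `M_{α(j;ℓ)}(k) → M_{α(j;ℓ)}(k+1)` of the interval representation:
the identity inside the interval, `0` outside. -/
noncomputable def intervalMap (j : ℤ) (ℓ : ℕ) (k : ℤ) :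
    intervalSub j ℓ k →ₗ[ℂ] intervalSub j ℓ (k + 1) where
  toFun x := ⟨if j ≤ k + 1 ∧ k + 1 < j + (ℓ : ℤ) then (x : ℂ) else 0, by
    by_cases hc : j ≤ k + 1 ∧ k + 1 < j + (ℓ : ℤ)
    · simp [intervalSub, hc]
    · simp [intervalSub, hc]⟩
  map_add' x y := by
    apply Subtype.ext
    by_cases hc : j ≤ k + 1 ∧ k + 1 < j + (ℓ : ℤ) <;> simp [hc]
  map_smul' c x := by
    apply Subtype.ext
    by_cases hc : j ≤ k + 1 ∧ k + 1 < j + (ℓ : ℤ) <;> simp [hc]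

/-- The interval representation, as a family of structure maps. -/
noncomputable def ivMap (j : ℤ) (ℓ : ℕ) :
    ∀ k : ℤ, intervalSub j ℓ k →ₗ[ℂ] intervalSub j ℓ (k + 1) :=
  fun k => intervalMap j ℓ k

/-- `φ` is a morphism of representations of the `A_∞` quiver from `(V, f)` to `(W, g)`. -/
def IsRepMap {V W : ℤ → Type} [∀ k, AddCommGroup (V k)] [∀ k, Module ℂ (V k)]
    [∀ k, AddCommGroup (W k)] [∀ k, Module ℂ (W k)]
    (f : ∀ k, V k →ₗ[ℂ] V (k + 1)) (g : ∀ k, W k →ₗ[ℂ] W (k + 1))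
    (φ : ∀ k, V k →ₗ[ℂ] W k) : Prop :=
  ∀ k, (g k).comp (φ k) = (φ (k + 1)).comp (f k)

/-- The space of morphisms of representations from `(V, f)` to `(W, g)`, as a submodule
of `Π k, Hom(V k, W k)`. -/
def repHom {V W : ℤ → Type} [∀ k, AddCommGroup (V k)] [∀ k, Module ℂ (V k)]
    [∀ k, AddCommGroup (W k)] [∀ k, Module ℂ (W k)]
    (f : ∀ k, V k →ₗ[ℂ] V (k + 1)) (g : ∀ k, W k →ₗ[ℂ] W (k + 1)) :
    Submodule ℂ (∀ k, V k →ₗ[ℂ] W k) where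
  carrier := {φ | ∀ k, (g k).comp (φ k) = (φ (k + 1)).comp (f k)}
  add_mem' := by
    intro a b ha hb k
    simp only [Pi.add_apply, LinearMap.add_comp, LinearMap.comp_add, ha k, hb k]
  zero_mem' := by
    intro k
    simp
  smul_mem' := by
    intro c a ha k
    simp only [Pi.smul_apply, LinearMap.comp_smul, LinearMap.smul_comp, ha k]

/-- `dim Hom(M_{α(j;ℓ)}, M_{α(j';ℓ')})` in the category of representations. -/
noncomputable def homDimIv (j : ℤ) (ℓ : ℕ) (j' : ℤ) (ℓ' : ℕ) : ℕ :=
  Module.finrank ℂ ↥(repHom (ivMap j ℓ) (ivMap j' ℓ'))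

/-- The Euler form `⟨a, b⟩ = Σ_k a_k b_k - Σ_k a_k b_{k+1}` of the `A_∞` quiver
(vertices `ℤ`, arrows `k → k+1`), for finitely supported dimension vectors. -/
noncomputable def eulerFormA (a b : ℤ → ℤ) : ℤ :=
  ∑ᶠ k : ℤ, (a k * b k - a k * b (k + 1))

/-- The dimension vector of the interval module `M_{α(j;ℓ)}`. -/
def dimvIv (j : ℤ) (ℓ : ℕ) : ℤ → ℤ :=
  fun k => if j ≤ k ∧ k < j + (ℓ : ℤ) then 1 else 0

/-- `dim Ext¹(M_{α(j;ℓ)}, M_{α(j';ℓ')})` in the (hereditary) category of representations,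
computed via `dim Ext¹(A, B) = dim Hom(A, B) - ⟨dim A, dim B⟩`. -/
noncomputable def ext1Iv (j : ℤ) (ℓ : ℕ) (j' : ℤ) (ℓ' : ℕ) : ℤ :=
  (homDimIv j ℓ j' ℓ' : ℤ) - eulerFormA (dimvIv j ℓ) (dimvIv j' ℓ')

/-- `dim Ext¹_D(A[a], B[b]) = dim Hom_D(A, B[b - a + 1])` in the bounded derived category
`D` of the category of representations, for modules `A = M_{α(j;ℓ)}`, `B = M_{α(j';ℓ')}`
placed in cohomological shifts `a`, `b`: it is `Ext¹(A,B)` if `b = a`, `Hom(A,B)` if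
`b = a - 1`, and `0` otherwise (the category being hereditary). -/
noncomputable def ext1Shifted (j : ℤ) (ℓ : ℕ) (a : ℤ) (j' : ℤ) (ℓ' : ℕ) (b : ℤ) : ℤ :=
  if b = a then ext1Iv j ℓ j' ℓ'
  else if b = a - 1 then (homDimIv j ℓ j' ℓ' : ℤ)
  else 0

/-- The object `X(j)` of `D^b(ℂQ'-mod)` for the linear quiver `Q' = 1 → 2 → ⋯ → N-1`:
`X(j) = S_i[-2k]` (the simple at vertex `i`, i.e. the interval `M_{α(i;1)}`) if
`j = i + kN` with `1 ≤ i < N`, and `X(j) = M_θ[-2k+1]` (the sincere indecomposable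
`M_{α(1;N-1)}`) if `j = kN`.  Encoded as `(start, length, shift)`. -/
def Xobj (N : ℕ) (j : ℤ) : ℤ × ℕ × ℤ :=
  if j % (N : ℤ) = 0 then (1, N - 1, -2 * (j / (N : ℤ)) + 1)
  else (j % (N : ℤ), 1, -2 * (j / (N : ℤ)))

/-! Inside an interval the structure maps of an interval module are isomorphisms, so a morphism
of interval modules vanishes once it vanishes at the first vertex of its source (propagate upwards
through surjections) or at the last vertex of its target (propagate downwards through injections).
Hence `Hom(M_[a,b), M_[a',b'))` is at most one-dimensional, and nonzero exactly when
`a' ≤ a < b' ≤ b`. With the Euler form this shows that intervals are rigid, that `Ext¹(S_i, S_i')`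
is nonzero only for `i' = i + 1`, and that `Hom(S_i, M_θ)` resp. `Hom(M_θ, S_i)` is nonzero only
for `i = N - 1` resp. `i = 1`. Writing `j = Nq + r` with `0 ≤ r < N`, the pairs of objects with
nonzero `Ext¹` in the derived category are then exactly the consecutive ones. -/

section Representations

variable {V W : ℤ → Type} [∀ k, AddCommGroup (V k)] [∀ k, Module ℂ (V k)]
  [∀ k, AddCommGroup (W k)] [∀ k, Module ℂ (W k)]
  {f : ∀ k, V k →ₗ[ℂ] V (k + 1)} {g : ∀ k, W k →ₗ[ℂ] W (k + 1)}

theorem repHom_apply_succ_eq_zero {φ : ∀ k, V k →ₗ[ℂ] W k} (hφ : φ ∈ repHom f g) {k : ℤ}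
    (hk : φ k = 0) (hf : Function.Surjective (f k)) : φ (k + 1) = 0 := by
  rw [← LinearMap.cancel_right hf, ← hφ k, hk, LinearMap.comp_zero, LinearMap.zero_comp]

theorem repHom_apply_eq_zero_of_succ {φ : ∀ k, V k →ₗ[ℂ] W k} (hφ : φ ∈ repHom f g) {k : ℤ}
    (hk : φ (k + 1) = 0) (hg : Function.Injective (g k)) : φ k = 0 := by
  rw [← LinearMap.cancel_left hg, hφ k, hk, LinearMap.comp_zero, LinearMap.zero_comp]

variable {j : ℤ} {ℓ : ℕ} {k : ℤ}

theorem intervalSub_eq_top (h : j ≤ k ∧ k < j + (ℓ : ℤ)) : intervalSub j ℓ k = ⊤ := if_pos h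

theorem subsingleton_intervalSub (h : ¬(j ≤ k ∧ k < j + (ℓ : ℤ))) :
    Subsingleton (intervalSub j ℓ k) := by
  rw [intervalSub, if_neg h]
  infer_instance

theorem coe_intervalMap (x : intervalSub j ℓ k) :
    (intervalMap j ℓ k x : ℂ) = if j ≤ k + 1 ∧ k + 1 < j + (ℓ : ℤ) then (x : ℂ) else 0 := rfl

theorem intervalMap_surjective (hk : j ≤ k) : Function.Surjective (intervalMap j ℓ k) := by
  intro y
  by_cases hy : j ≤ k + 1 ∧ k + 1 < j + (ℓ : ℤ)
  · have hx : (y : ℂ) ∈ intervalSub j ℓ k := by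
      rw [intervalSub_eq_top ⟨hk, by omega⟩]; trivial
    exact ⟨⟨y, hx⟩, Subtype.ext (by rw [coe_intervalMap, if_pos hy])⟩
  · have := subsingleton_intervalSub hy
    exact ⟨0, Subsingleton.elim _ _⟩

theorem intervalMap_injective (hk : k + 1 < j + (ℓ : ℤ)) :
    Function.Injective (intervalMap j ℓ k) := by
  intro x y hxy
  by_cases hx : j ≤ k
  · have := congrArg Subtype.val hxy
    rwa [coe_intervalMap, coe_intervalMap, if_pos ⟨by omega, hk⟩, if_pos ⟨by omega, hk⟩,
      ← Subtype.ext_iff] at this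
  · have : Subsingleton (intervalSub j ℓ k) := subsingleton_intervalSub (by omega)
    exact Subsingleton.elim _ _

theorem eq_zero_of_mem_repHom_ivMap_left {φ : ∀ k, intervalSub j ℓ k →ₗ[ℂ] W k}
    (hφ : φ ∈ repHom (ivMap j ℓ) g) (hj : φ j = 0) : φ = 0 := by
  funext k
  rcases lt_or_ge k j with hk | hk
  · have : Subsingleton (intervalSub j ℓ k) := subsingleton_intervalSub (by omega)
    exact Subsingleton.elim _ _
  · induction k, hk using Int.leInduction with
    | base => exact hj
    | succ k hk ih => exact repHom_apply_succ_eq_zero hφ ih (intervalMap_surjective hk)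

theorem eq_zero_of_mem_repHom_ivMap_right {φ : ∀ k, V k →ₗ[ℂ] intervalSub j ℓ k}
    (hφ : φ ∈ repHom f (ivMap j ℓ)) (hj : φ (j + ℓ - 1) = 0) : φ = 0 := by
  funext k
  rcases le_or_gt k (j + ℓ - 1) with hk | hk
  · induction k, hk using Int.leInductionDown with
    | base => exact hj
    | pred k hk ih =>
      exact repHom_apply_eq_zero_of_succ hφ (by rwa [sub_add_cancel])
        (intervalMap_injective (by omega))
  · have : Subsingleton (intervalSub j ℓ k) := subsingleton_intervalSub (by omega)
    exact Subsingleton.elim _ _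

end Representations

section IntervalHom

variable {j j' : ℤ} {ℓ ℓ' : ℕ}

theorem repHom_ivMap_eq_bot (h : ¬(j' ≤ j ∧ j < j' + ℓ' ∧ j' + ℓ' ≤ j + ℓ)) :
    repHom (ivMap j ℓ) (ivMap j' ℓ') = ⊥ := by
  refine (Submodule.eq_bot_iff _).2 fun φ hφ => ?_
  by_cases hj : j' ≤ j ∧ j < j' + ℓ'
  · apply eq_zero_of_mem_repHom_ivMap_right hφ
    have : Subsingleton (intervalSub j ℓ (j' + ℓ' - 1)) := subsingleton_intervalSub (by omega)
    exact Subsingleton.elim _ _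
  · apply eq_zero_of_mem_repHom_ivMap_left hφ
    have : Subsingleton (intervalSub j' ℓ' j) := subsingleton_intervalSub hj
    exact Subsingleton.elim _ _

theorem injective_repHom_ivMap_eval :
    Function.Injective ((LinearMap.proj j).comp (repHom (ivMap j ℓ) (ivMap j' ℓ')).subtype) := by
  rw [← LinearMap.ker_eq_bot, LinearMap.ker_eq_bot']
  exact fun φ hφ => Subtype.ext (eq_zero_of_mem_repHom_ivMap_left φ.2 hφ)

instance : Module.Finite ℂ (repHom (ivMap j ℓ) (ivMap j' ℓ')) :=
  Module.Finite.of_injective _ injective_repHom_ivMap_eval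

theorem homDimIv_le_one : homDimIv j ℓ j' ℓ' ≤ 1 :=
  calc homDimIv j ℓ j' ℓ'
      ≤ Module.finrank ℂ (intervalSub j ℓ j →ₗ[ℂ] intervalSub j' ℓ' j) :=
        LinearMap.finrank_le_finrank_of_injective injective_repHom_ivMap_eval
    _ = Module.finrank ℂ (intervalSub j ℓ j) * Module.finrank ℂ (intervalSub j' ℓ' j) :=
        Module.finrank_linearMap ℂ ℂ _ _
    _ ≤ 1 * 1 := by
        gcongr <;> exact (Submodule.finrank_le _).trans (Module.finrank_self ℂ).le

noncomputable def intervalRestrict (j : ℤ) (ℓ : ℕ) (j' : ℤ) (ℓ' : ℕ) (k : ℤ) :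
    intervalSub j ℓ k →ₗ[ℂ] intervalSub j' ℓ' k :=
  if h : j' ≤ k ∧ k < j' + (ℓ' : ℤ) then
    Submodule.inclusion ((intervalSub_eq_top h).symm ▸ le_top)
  else 0

theorem coe_intervalRestrict {k : ℤ} (x : intervalSub j ℓ k) :
    (intervalRestrict j ℓ j' ℓ' k x : ℂ) = if j' ≤ k ∧ k < j' + (ℓ' : ℤ) then (x : ℂ) else 0 := by
  unfold intervalRestrict
  split_ifs <;> rfl

theorem intervalRestrict_mem_repHom (h₁ : j' ≤ j) (h₂ : j' + (ℓ' : ℤ) ≤ j + ℓ) :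
    intervalRestrict j ℓ j' ℓ' ∈ repHom (ivMap j ℓ) (ivMap j' ℓ') := by
  intro k
  ext x
  simp only [LinearMap.comp_apply, ivMap, coe_intervalMap, coe_intervalRestrict]
  by_cases hx : j ≤ k ∧ k < j + (ℓ : ℤ)
  · split_ifs <;> first | rfl | omega
  · rw [(subsingleton_intervalSub hx).elim x 0]
    simp

theorem intervalRestrict_ne_zero (h : j' ≤ j ∧ j < j' + ℓ' ∧ j' + ℓ' ≤ j + ℓ) :
    intervalRestrict j ℓ j' ℓ' ≠ 0 := by
  intro h0
  have hmem : (1 : ℂ) ∈ intervalSub j ℓ j := by rw [intervalSub_eq_top ⟨le_rfl, by omega⟩]; trivial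
  have := congrArg (fun φ => (φ j ⟨1, hmem⟩ : ℂ)) h0
  simp [coe_intervalRestrict, h.1, h.2.1] at this

theorem homDimIv_eq :
    homDimIv j ℓ j' ℓ' = if j' ≤ j ∧ j < j' + ℓ' ∧ j' + ℓ' ≤ j + ℓ then 1 else 0 := by
  split_ifs with h
  · refine le_antisymm homDimIv_le_one (Module.finrank_pos_iff_exists_ne_zero.2 ?_)
    exact ⟨⟨_, intervalRestrict_mem_repHom h.1 h.2.2⟩,
      fun h0 => intervalRestrict_ne_zero h (congrArg Subtype.val h0)⟩
  · rw [homDimIv, repHom_ivMap_eq_bot h, finrank_bot]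

end IntervalHom

section Euler

variable {j : ℤ} {ℓ : ℕ}

theorem eulerFormA_dimvIv_one_left (i : ℤ) (b : ℤ → ℤ) :
    eulerFormA (dimvIv i 1) b = b i - b (i + 1) := by
  unfold eulerFormA
  rw [finsum_eq_single _ i fun k hk => by simp only [dimvIv]; rw [if_neg (by omega)]; ring]
  simp [dimvIv]

theorem eulerFormA_dimvIv_self (hℓ : 0 < ℓ) : eulerFormA (dimvIv j ℓ) (dimvIv j ℓ) = 1 := by
  unfold eulerFormA
  rw [finsum_eq_single _ (j + ℓ - 1) fun k hk => by simp only [dimvIv]; split_ifs <;> omega]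
  simp only [dimvIv]
  split_ifs <;> omega

theorem ext1Iv_self (hℓ : 0 < ℓ) : ext1Iv j ℓ j ℓ = 0 := by
  rw [ext1Iv, homDimIv_eq, if_pos (by omega), eulerFormA_dimvIv_self hℓ]
  rfl

theorem ext1Iv_one_one (i i' : ℤ) : ext1Iv i 1 i' 1 = if i' = i + 1 then 1 else 0 := by
  rw [ext1Iv, homDimIv_eq, eulerFormA_dimvIv_one_left]
  simp only [dimvIv]
  split_ifs <;> omega

end Euler

theorem Xobj_mul_add {N : ℕ} {q r : ℤ} (hr : 0 ≤ r ∧ r < N) :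
    Xobj N (N * q + r) = if r = 0 then (1, N - 1, -2 * q + 1) else (r, 1, -2 * q) := by
  obtain ⟨hdiv, hmod⟩ := (Int.ediv_emod_unique (q := q) (by omega)).2 ⟨add_comm _ _, hr⟩
  simp only [Xobj, hdiv, hmod]

theorem mul_add_eq_mul_add_add_one_iff {N q q' r r' : ℤ} (hr : 0 ≤ r ∧ r < N)
    (hr' : 0 ≤ r' ∧ r' < N) :
    N * q' + r' = N * q + r + 1 ↔ q' = q ∧ r' = r + 1 ∨ q' = q + 1 ∧ r = N - 1 ∧ r' = 0 := by
  constructor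
  · intro h
    have hlt : q' - q < 2 := by nlinarith
    have hgt : -1 < q' - q := by nlinarith
    obtain rfl | rfl : q' = q ∨ q' = q + 1 := by omega
    · omega
    · rw [mul_add_one] at h
      omega
  · rintro (⟨rfl, rfl⟩ | ⟨rfl, rfl, rfl⟩) <;> ring

/-- For the linear quiver of type `A_{N-1}` with monotone orientation,
the family `X(j)` defined above satisfies `dim Ext¹(X(j), X(j')) = 1` if `j' = j + 1`
and `0` otherwise; i.e. the resulting quiver `Γ_J` is the `A_∞` quiver with monotone
orientation. -/
theorem statement14 (N : ℕ) (hN : 2 ≤ N) :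
    ∀ j j' : ℤ,
      ext1Shifted (Xobj N j).1 (Xobj N j).2.1 (Xobj N j).2.2
          (Xobj N j').1 (Xobj N j').2.1 (Xobj N j').2.2 =
        if j' = j + 1 then 1 else 0 := by
  have hN0 : (0 : ℤ) < N := by omega
  have decompose (j : ℤ) : ∃ q r : ℤ, (0 ≤ r ∧ r < N) ∧ N * q + r = j :=
    ⟨j / N, j % N, ⟨Int.emod_nonneg j hN0.ne', Int.emod_lt_of_pos j hN0⟩, Int.mul_ediv_add_emod j N⟩
  intro j j'
  obtain ⟨q, r, hr, rfl⟩ := decompose j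
  obtain ⟨q', r', hr', rfl⟩ := decompose j'
  rw [Xobj_mul_add hr, Xobj_mul_add hr']
  simp only [mul_add_eq_mul_add_add_one_iff hr hr']
  have hθ : 0 < N - 1 := by omega
  -- what remains is a Boolean combination of linear conditions on `q, q', r, r', N`
  by_cases hr0 : r = 0 <;> by_cases hr0' : r' = 0 <;>
    simp only [hr0, hr0', if_true, if_false, ext1Shifted, ext1Iv_one_one, ext1Iv_self hθ,
      homDimIv_eq, Nat.cast_ite, Nat.cast_one, Nat.cast_zero, and_true, and_false, or_false] <;>
    split_ifs <;> omega
end
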